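/- arXiv:2412.19605 — 9 statements merged into one kernel-verified Lean document; each statement's English description precedes it below -/
import Mathlib

section
/- If S and T are infinite extremally disconnected compact Hausdorff topological spaces, then the product space S × T (with the product topology) is not extremally disconnected. -/
/-!
Infinite Hausdorff spaces carry sequences of pairwise disjoint nonempty open sets; choose such
`U n ⊆ S`, `V n ⊆ T` and points `s n ∈ U n`, `t n ∈ V n`. The open sets `⋃_{m < n} U m ×ˢ V n`
and `⋃_{m > n} U m ×ˢ V n` are disjoint, but a cluster point of the diagonal sequence
`(s n, t n)`, which exists by compactness, lies in the closure of both; in an extremally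
disconnected space disjoint open sets have disjoint closures.
-/

open Set Filter Topology Function

section RectangleUnions

variable {X Y : Type*} {U : ℕ → Set X} {V : ℕ → Set Y}

lemma disjoint_iUnion_prod_lt_gt (hU : Pairwise (Disjoint on U)) (hV : Pairwise (Disjoint on V)) :
    Disjoint (⋃ (m : ℕ) (n : ℕ) (_ : m < n), U m ×ˢ V n)
      (⋃ (m : ℕ) (n : ℕ) (_ : n < m), U m ×ˢ V n) := by
  simp only [disjoint_iUnion_left, disjoint_iUnion_right, Set.disjoint_prod]
  intro m n hmn m' n' hnm'
  by_contra! h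
  have hm := hU.eq h.1
  have hn := hV.eq h.2
  omega

variable [TopologicalSpace X] [TopologicalSpace Y]

lemma isOpen_iUnion_prod (hU : ∀ n, IsOpen (U n)) (hV : ∀ n, IsOpen (V n))
    (r : ℕ → ℕ → Prop) : IsOpen (⋃ (m : ℕ) (n : ℕ) (_ : r m n), U m ×ˢ V n) :=
  isOpen_iUnion fun m ↦ isOpen_iUnion fun n ↦ isOpen_iUnion fun _ ↦ (hU m).prod (hV n)

lemma mem_closure_iUnion_prod_of_mapClusterPt {r : ℕ → ℕ → Prop}
    (hr : ∀ m n, m ≠ n → r m n ∨ r n m) {s : ℕ → X} {t : ℕ → Y}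
    (hs : ∀ n, s n ∈ U n) (ht : ∀ n, t n ∈ V n) {z : X × Y}
    (hz : MapClusterPt z atTop fun n ↦ (s n, t n)) :
    z ∈ closure (⋃ (m : ℕ) (n : ℕ) (_ : r m n), U m ×ˢ V n) := by
  have hmem : ∀ m n, r m n → (s m, t n) ∈ ⋃ (m : ℕ) (n : ℕ) (_ : r m n), U m ×ˢ V n :=
    fun m n hmn ↦ mem_iUnion₂.2 ⟨m, n, mem_iUnion.2 ⟨hmn, hs m, ht n⟩⟩
  rw [mem_closure_iff_nhds]
  intro W hW
  rw [nhds_prod_eq] at hW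
  obtain ⟨P, hP, Q, hQ, hPQ⟩ := mem_prod_iff.mp hW
  have hfreq : ∃ᶠ n in atTop, s n ∈ P ∧ t n ∈ Q :=
    mapClusterPt_iff_frequently.mp hz _ (prod_mem_nhds hP hQ)
  obtain ⟨m, -, hm⟩ := frequently_atTop.mp hfreq 0
  obtain ⟨n, hmn, hn⟩ := frequently_atTop.mp hfreq (m + 1)
  rcases hr m n (by omega) with h | h
  · exact ⟨(s m, t n), hPQ ⟨hm.1, hn.2⟩, hmem m n h⟩
  · exact ⟨(s n, t m), hPQ ⟨hn.1, hm.2⟩, hmem n m h⟩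

end RectangleUnions

theorem stmt_0_general (S T : Type*) [TopologicalSpace S] [TopologicalSpace T]
    [CompactSpace S] [T2Space S] [Infinite S]
    [CompactSpace T] [T2Space T] [Infinite T] :
    ¬ ExtremallyDisconnected (S × T) := by
  intro _
  obtain ⟨U, hUinf, hUopen, hUdisj⟩ := exists_seq_infinite_isOpen_pairwise_disjoint S
  obtain ⟨V, hVinf, hVopen, hVdisj⟩ := exists_seq_infinite_isOpen_pairwise_disjoint T
  choose s hs using fun n ↦ (hUinf n).nonempty
  choose t ht using fun n ↦ (hVinf n).nonempty
  obtain ⟨z, hz⟩ := exists_clusterPt_of_compactSpace (map (fun n ↦ (s n, t n)) atTop)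
  have hclosures := ExtremallyDisconnected.disjoint_closure_of_disjoint_isOpen
    (disjoint_iUnion_prod_lt_gt hUdisj hVdisj)
    (isOpen_iUnion_prod hUopen hVopen _) (isOpen_iUnion_prod hUopen hVopen _)
  exact hclosures.notMem_of_mem_left
    (mem_closure_iUnion_prod_of_mapClusterPt (fun _ _ h ↦ h.lt_or_gt) hs ht hz)
    (mem_closure_iUnion_prod_of_mapClusterPt (fun _ _ h ↦ h.symm.lt_or_gt) hs ht hz)

/-- If `S` and `T` are infinite extremally disconnected compact Hausdorff
topological spaces, then the product space `S × T` (with the product topology) is not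
extremally disconnected. -/
theorem stmt_0 (S T : Type*) [TopologicalSpace S] [TopologicalSpace T]
    [CompactSpace S] [T2Space S] [ExtremallyDisconnected S] [Infinite S]
    [CompactSpace T] [T2Space T] [ExtremallyDisconnected T] [Infinite T] :
    ¬ ExtremallyDisconnected (S × T) :=
  stmt_0_general S T
end

section
/- Let K be a finite field and S an extremally disconnected compact Hausdorff space. Then the constant sheaf 𝒦 associated with the K-module K is an injective object of the category of sheaves of K-modules on S. -/
/-!
A morphism into the sheaf of all `M`-valued functions is the same as a family of linear maps
out of the stalks, and stalk maps of monomorphisms of sheaves are injective; so this sheaf is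
injective whenever `M` is an injective module (e.g. any vector space).

The constant sheaf is the sheaf of locally constant functions. For `M` finite and `X`
extremally disconnected it is a retract of the sheaf of all functions. By Gleason's theorem
the limit map `βX → X` has a continuous section `σ`, and `f ↦ (x ↦ lim_{σ x} f)` is the
retraction: `u ↦ lim_u f` is locally constant on `βX` because `M` is finite, so the image is
locally constant; it commutes with restrictions and fixes locally constant functions because
`σ x` converges to `x`.
-/

open CategoryTheory TopologicalSpace Opposite Filter Topology TopCat.Presheaf

noncomputable section

namespace Ultrafilter

variable {X α β γ : Type*} [Finite α] [Finite β] [Finite γ] {u : Ultrafilter X}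

def finiteLim (u : Ultrafilter X) (f : X → α) : α :=
  (u.map f).eq_pure_of_finite.choose

theorem finiteLim_eq_iff {f : X → α} {a : α} : u.finiteLim f = a ↔ f ⁻¹' {a} ∈ u := by
  have hlim : u.map f = pure (u.finiteLim f) := (u.map f).eq_pure_of_finite.choose_spec
  rw [← mem_map, hlim, mem_pure, Set.mem_singleton_iff]

theorem preimage_finiteLim_mem (f : X → α) : f ⁻¹' {u.finiteLim f} ∈ u :=
  finiteLim_eq_iff.mp rfl

theorem finiteLim_congr {f g : X → α} (h : f =ᶠ[(u : Filter X)] g) :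
    u.finiteLim f = u.finiteLim g :=
  finiteLim_eq_iff.mpr <| by
    filter_upwards [preimage_finiteLim_mem g, h] with x hg hfg
    exact hfg.trans hg

theorem finiteLim_comp₂ (op : α → β → γ) (f : X → α) (g : X → β) :
    u.finiteLim (fun x => op (f x) (g x)) = op (u.finiteLim f) (u.finiteLim g) :=
  finiteLim_eq_iff.mpr <| by
    filter_upwards [preimage_finiteLim_mem f, preimage_finiteLim_mem g] with x hf hg
    simp_all

theorem finiteLim_comp (φ : α → β) (f : X → α) : u.finiteLim (φ ∘ f) = φ (u.finiteLim f) :=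
  finiteLim_comp₂ (fun a (_ : Unit) => φ a) f fun _ => ()

theorem isLocallyConstant_finiteLim (f : X → α) :
    IsLocallyConstant fun u : Ultrafilter X => u.finiteLim f :=
  IsLocallyConstant.iff_isOpen_fiber.mpr fun a => by
    convert ultrafilter_isOpen_basic (f ⁻¹' {a}) using 1
    ext u
    exact finiteLim_eq_iff

variable (R M : Type*) [Semiring R] [AddCommMonoid M] [Module R M] [Finite M]

def finiteLimₗ (u : Ultrafilter X) : (X → M) →ₗ[R] M where
  toFun := u.finiteLim
  map_add' := finiteLim_comp₂ (· + ·)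
  map_smul' c := finiteLim_comp (c • ·)

end Ultrafilter

/-- Gleason: `X` is projective among compact Hausdorff spaces, so the surjection
`Ultrafilter.extend id : βX → X` has a continuous section. -/
theorem ExtremallyDisconnected.exists_continuous_ultrafilter_le_nhds (X : Type*)
    [TopologicalSpace X] [CompactSpace X] [T2Space X] [ExtremallyDisconnected X] :
    ∃ σ : X → Ultrafilter X, Continuous σ ∧ ∀ x, ↑(σ x) ≤ 𝓝 x := by
  obtain ⟨σ, hσ, hlim⟩ := CompactT2.ExtremallyDisconnected.projective
    (f := (id : X → X)) continuous_id (continuous_ultrafilter_extend id)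
    (fun x => ⟨pure x, ultrafilter_extend_pure id x⟩)
  refine ⟨σ, hσ, fun x => ?_⟩
  simpa using ultrafilter_extend_eq_iff.mp (congrFun hlim x)

section

variable {C : Type*} [Category C] {J : GrothendieckTopology C}
variable {A : Type*} [Category A] {FA : A → A → Type*} {CA : A → Type*}
variable [∀ X Y, FunLike (FA X Y) (CA X) (CA Y)] [ConcreteCategory A FA]
variable [HasWeakSheafify J A] [J.WEqualsLocallyBijective A]

def sheafificationIsoOfIsLocallyBijective {P : Cᵒᵖ ⥤ A} {F : Sheaf J A} (f : P ⟶ F.obj)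
    [Presheaf.IsLocallyInjective J f] [Presheaf.IsLocallySurjective J f] :
    (presheafToSheaf J A).obj P ≅ F :=
  have := (J.W_iff f).mp (J.W_of_isLocallyBijective f)
  asIso ((presheafToSheaf J A).map f) ≪≫ asIso ((sheafificationAdjunction J A).counit.app F)

end

section

variable (R M : Type*) [Semiring R] [AddCommMonoid M] [Module R M] {ι κ : Type*}

def extendByZeroₗ (e : ι → κ) : (ι → M) →ₗ[R] (κ → M) where
  toFun f := Function.extend e f 0
  map_add' f g := by rw [← Function.extend_add, add_zero]
  map_smul' c f := by rw [RingHom.id_apply, ← Function.extend_smul, smul_zero]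

variable {R M} in
theorem extendByZeroₗ_apply {e : ι → κ} (he : Function.Injective e) (f : ι → M) (i : ι) :
    extendByZeroₗ R M e f (e i) = f i :=
  he.extend_apply f 0 i

end

def TopCat.locallyConstantLocal (X : TopCat) (T : Type*) : LocalPredicate fun _ : X => T where
  pred f := IsLocallyConstant f
  res i _ hf := hf.comp_continuous (Opens.isOpenEmbedding_of_le i.le).continuous
  locality f hf := by
    let : TopologicalSpace T := ⊥
    have : DiscreteTopology T := ⟨rfl⟩
    simp only [IsLocallyConstant.iff_continuous] at hf ⊢
    exact (continuousLocal X T).locality f hf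

def locallyConstantSubmodule (R M U : Type*) [Semiring R] [AddCommMonoid M] [Module R M]
    [TopologicalSpace U] : Submodule R (U → M) where
  carrier := {f | IsLocallyConstant f}
  add_mem' hf hg := hf.add hg
  zero_mem' := IsLocallyConstant.const 0
  smul_mem' c _ hf := hf.comp (c • ·)

section

variable (R : Type) [Ring R] (M : Type) [AddCommGroup M] [Module R M] (X : TopCat.{0})

def functionsPresheaf : TopCat.Presheaf (ModuleCat.{0} R) X where
  obj U := ModuleCat.of R (↥(unop U) → M)
  map i := ModuleCat.ofHom (LinearMap.funLeft R M fun x => i.unop x)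

theorem functionsPresheaf_isSheaf : (functionsPresheaf R M X).IsSheaf :=
  (isSheaf_iff_isSheaf_comp (forget (ModuleCat R)) _).mpr (toType_isSheaf _ M)

abbrev functionsSheaf : Sheaf (Opens.grothendieckTopology X) (ModuleCat.{0} R) :=
  ⟨functionsPresheaf R M X, functionsPresheaf_isSheaf R M X⟩

def locallyConstantPresheaf : TopCat.Presheaf (ModuleCat.{0} R) X where
  obj U := ModuleCat.of R (locallyConstantSubmodule R M ↥(unop U))
  map i := ModuleCat.ofHom <| (LinearMap.funLeft R M fun x => i.unop x).restrict
    fun f (hf : IsLocallyConstant f) =>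
      hf.comp_continuous (Opens.isOpenEmbedding_of_le i.unop.le).continuous

theorem locallyConstantPresheaf_isSheaf : (locallyConstantPresheaf R M X).IsSheaf :=
  (isSheaf_iff_isSheaf_comp (forget (ModuleCat R)) _).mpr
    (TopCat.subpresheafToTypes.isSheaf (TopCat.locallyConstantLocal X M))

abbrev locallyConstantSheaf : Sheaf (Opens.grothendieckTopology X) (ModuleCat.{0} R) :=
  ⟨locallyConstantPresheaf R M X, locallyConstantPresheaf_isSheaf R M X⟩

def locallyConstantToFunctions : locallyConstantSheaf R M X ⟶ functionsSheaf R M X :=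
  ObjectProperty.homMk
    { app U := ModuleCat.ofHom (locallyConstantSubmodule R M ↥(unop U)).subtype }

def constToLocallyConstant :
    (Functor.const (Opens X)ᵒᵖ).obj (ModuleCat.of R M) ⟶ locallyConstantPresheaf R M X where
  app U := ModuleCat.ofHom
    { toFun c := ⟨fun _ => c, IsLocallyConstant.const c⟩
      map_add' _ _ := rfl
      map_smul' _ _ := rfl }

end

namespace functionsPresheaf

variable {R : Type} [Ring R] {M : Type} [AddCommGroup M] [Module R M] {X : TopCat.{0}}

def lift {P : TopCat.Presheaf (ModuleCat.{0} R) X} (φ : ∀ x : X, P.stalk x ⟶ ModuleCat.of R M) :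
    P ⟶ functionsPresheaf R M X where
  app U := ModuleCat.ofHom (LinearMap.pi fun v : ↥(unop U) => (P.germ (unop U) v v.2 ≫ φ v).hom)
  naturality U V i := by
    ext b
    funext v
    exact congrArg (φ v) (P.germ_res_apply' i v v.2 b)

variable (R M) in
def evalStalk (x : X) : (functionsPresheaf R M X).stalk x ⟶ ModuleCat.of R M :=
  Limits.colimit.desc _
    { pt := ModuleCat.of R M
      ι.app (V : (OpenNhds x)ᵒᵖ) := ModuleCat.ofHom (LinearMap.proj (R := R)
        (φ := fun _ : ↥(unop V).1 => M) ⟨x, (unop V).2⟩) }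

theorem germ_evalStalk (U : Opens X) (x : X) (hx : x ∈ U) (f : ↥U → M) :
    evalStalk R M x ((functionsPresheaf R M X).germ U x hx f) = f ⟨x, hx⟩ := by
  unfold evalStalk
  exact Limits.colimit.ι_desc_apply (F := (OpenNhds.inclusion x).op ⋙ functionsPresheaf R M X) _
    (op (⟨U, hx⟩ : OpenNhds x)) f

theorem comp_lift {P Q : TopCat.Presheaf (ModuleCat.{0} R) X} (f : P ⟶ Q)
    (φ : ∀ x : X, Q.stalk x ⟶ ModuleCat.of R M) :
    f ≫ lift φ = lift fun x => (stalkFunctor (ModuleCat R) x).map f ≫ φ x := by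
  ext U b
  funext v
  exact congrArg (φ v) (stalkFunctor_map_germ_apply U v v.2 f b).symm

theorem lift_evalStalk {P : TopCat.Presheaf (ModuleCat.{0} R) X}
    (g : P ⟶ functionsPresheaf R M X) :
    lift (fun x => (stalkFunctor (ModuleCat R) x).map g ≫ evalStalk R M x) = g := by
  ext U b
  funext v
  show evalStalk R M v.1 ((stalkFunctor (ModuleCat R) v.1).map g (P.germ U v v.2 b)) =
    g.app (op U) b v
  rw [stalkFunctor_map_germ_apply]
  exact germ_evalStalk U v.1 v.2 (g.app (op U) b)

end functionsPresheaf

section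

open functionsPresheaf

variable {R : Type} [Ring R] {M : Type} [AddCommGroup M] [Module R M] {X : TopCat.{0}}

theorem injective_functionsSheaf [Injective (ModuleCat.of R M)] :
    Injective (functionsSheaf R M X) where
  factors {A B} g f _ := by
    -- `stalk_mono_of_mono` expects `Mono` in the category `TopCat.Sheaf`, a non-reducible copy.
    have := @stalk_mono_of_mono _ _ _ _ _ _ _ _ _ _ _ _ A B f ‹_›
    let ψ (x : X) := Injective.factorThru
      ((stalkFunctor (ModuleCat R) x).map g.hom ≫ evalStalk R M x)
      ((stalkFunctor (ModuleCat R) x).map f.hom)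
    have hψ (x : X) : (stalkFunctor (ModuleCat R) x).map f.hom ≫ ψ x =
        (stalkFunctor (ModuleCat R) x).map g.hom ≫ evalStalk R M x :=
      Injective.comp_factorThru _ _
    refine ⟨ObjectProperty.homMk (lift ψ), Sheaf.hom_ext ?_⟩
    exact (comp_lift f.hom ψ).trans ((congrArg lift (funext hψ)).trans (lift_evalStalk g.hom))

variable [Finite M] {σ : X → Ultrafilter X}

variable (R M) in
/-- Functions on `U` are extended by zero to `X` so that they can be evaluated along `σ x`. -/
def functionsToLocallyConstant (hσ : Continuous σ) (hσx : ∀ x, ↑(σ x) ≤ 𝓝 x) :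
    functionsSheaf R M X ⟶ locallyConstantSheaf R M X :=
  ObjectProperty.homMk
    { app U := ModuleCat.ofHom <| LinearMap.codRestrict _
        (LinearMap.pi fun v : ↥(unop U) =>
          (σ v).finiteLimₗ R M ∘ₗ extendByZeroₗ R M (Subtype.val : ↥(unop U) → X))
        fun f => (Ultrafilter.isLocallyConstant_finiteLim _).comp_continuous
          (hσ.comp continuous_subtype_val)
      naturality U V i := by
        ext f
        refine Subtype.ext (funext fun v => Ultrafilter.finiteLim_congr ?_)
        filter_upwards [hσx v ((unop V).2.mem_nhds v.2)] with y hy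
        exact (extendByZeroₗ_apply Subtype.val_injective _ ⟨y, hy⟩).trans
          (extendByZeroₗ_apply Subtype.val_injective f ⟨y, i.unop.le hy⟩).symm }

theorem locallyConstantToFunctions_comp_functionsToLocallyConstant (hσ : Continuous σ)
    (hσx : ∀ x, ↑(σ x) ≤ 𝓝 x) :
    locallyConstantToFunctions R M X ≫ functionsToLocallyConstant R M hσ hσx = 𝟙 _ := by
  ext U f
  refine Subtype.ext (funext fun v => Ultrafilter.finiteLim_eq_iff.mpr ?_)
  have hO : IsOpen (Subtype.val '' (f.1 ⁻¹' {f.1 v})) :=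
    (unop U).2.isOpenMap_subtype_val _ (f.2.isOpen_fiber _)
  filter_upwards [hσx v (hO.mem_nhds ⟨v, rfl, rfl⟩)]
  rintro _ ⟨w, hw, rfl⟩
  exact (extendByZeroₗ_apply Subtype.val_injective f.1 w).trans hw

theorem injective_locallyConstantSheaf [CompactSpace X] [T2Space X] [ExtremallyDisconnected X]
    [Injective (ModuleCat.of R M)] : Injective (locallyConstantSheaf R M X) :=
  have ⟨_, hσ, hσx⟩ := ExtremallyDisconnected.exists_continuous_ultrafilter_le_nhds X
  Retract.injective (i := injective_functionsSheaf)
    ⟨_, _, locallyConstantToFunctions_comp_functionsToLocallyConstant hσ hσx⟩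

end

section

variable {R : Type} [Ring R] {M : Type} [AddCommGroup M] [Module R M] {X : TopCat.{0}}

theorem isLocallyInjective_constToLocallyConstant :
    Presheaf.IsLocallyInjective (Opens.grothendieckTopology X) (constToLocallyConstant R M X) where
  equalizerSieve_mem {U} c d h x hx := by
    obtain rfl : c = d := congrFun (congrArg Subtype.val h) ⟨x, hx⟩
    rw [Presheaf.equalizerSieve_self_eq_top]
    exact ⟨_, 𝟙 _, trivial, hx⟩

theorem isLocallySurjective_constToLocallyConstant :
    Presheaf.IsLocallySurjective (Opens.grothendieckTopology X) (constToLocallyConstant R M X) :=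
  (isLocallySurjective_iff _).mpr fun U t x hx => by
    have hO : IsOpen (Subtype.val '' (t.1 ⁻¹' {t.1 ⟨x, hx⟩})) :=
      U.2.isOpenMap_subtype_val _ (t.2.isOpen_fiber _)
    refine ⟨⟨_, hO⟩, ?_, ⟨t.1 ⟨x, hx⟩, ?_⟩, ⟨x, hx⟩, rfl, rfl⟩
    · rintro _ ⟨w, -, rfl⟩
      exact w.2
    · refine Subtype.ext (funext fun w => ?_)
      obtain ⟨w', hw', hw'w⟩ := w.2
      exact hw'.symm.trans (congrArg t.1 (Subtype.ext hw'w))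

end

end

/-- Let `K` be a finite field and `S` an extremally disconnected compact
Hausdorff space. Then the constant sheaf associated with the `K`-module `K` is an injective
object of the category of sheaves of `K`-modules on `S`. -/
theorem stmt_1 (K : Type) [Field K] [Finite K]
    (S : Type) [TopologicalSpace S] [CompactSpace S] [T2Space S] [ExtremallyDisconnected S] :
    Injective ((constantSheaf (Opens.grothendieckTopology S) (ModuleCat K)).obj
      (ModuleCat.of K K)) := by
  have := Module.injective_object_of_injective_module K K
    (inj := Module.injective_of_isSemisimpleRing K K)
  have := isLocallyInjective_constToLocallyConstant (R := K) (M := K) (X := TopCat.of S)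
  have := isLocallySurjective_constToLocallyConstant (R := K) (M := K) (X := TopCat.of S)
  exact Injective.of_iso (sheafificationIsoOfIsLocallyBijective
    (J := Opens.grothendieckTopology (TopCat.of S)) (F := locallyConstantSheaf K K (TopCat.of S))
    (constToLocallyConstant K K (TopCat.of S))).symm injective_locallyConstantSheaf
end

section
/- There exists a family ⟨e_α : α → ω | α < ω₁⟩ of functions indexed by the countable ordinals such that: each e_α is finite-to-one (the preimage of every n < ω is finite); the family is coherent, i.e., for all α < β < ω₁ the set {ξ < α : e_β(ξ) ≠ e_α(ξ)} is finite; and the family is nontrivial, i.e., there is no function e : ω₁ → ω such that {ξ < α : e(ξ) ≠ e_α(ξ)} is finite for every α < ω₁. -/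
/-!
Enumerate each countable `α` as `s₀, s₁, …` and, for `ξ < α` with `N` least such that
`ξ < s_N`, put `e_α(ξ) = max (e_{s_N}(ξ), N)`. Then `e_α(ξ) ≤ k` forces `N ≤ k` and
`e_{s_N}(ξ) ≤ k`, so `e_α` is finite-to-one by induction. Below `s_m` we have `N ≤ m`, and off a
finite set `e_{s_N} = e_{s_m} ≥ m` there, so `e_α =* e_{s_m}`; every `β < α` is some `s_m`.
The family is nontrivial for a reason that only uses finite-to-one-ness: any `f : ω₁ → ω` has an
uncountable fibre, whose first `ω` elements lie below some countable `α`, and there `f` cannot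
agree modulo finite with the finite-to-one `e_α`.
-/

open Cardinal Ordinal Set Filter

theorem countable_Iio_iff_lt_omega_one {α : Ordinal} : (Iio α).Countable ↔ α < ω₁ := by
  rw [← le_aleph0_iff_set_countable, Cardinal.mk_Iio_ordinal, lift_le_aleph0,
    lt_omega_iff_card_lt, lt_aleph_one_iff]

theorem exists_infinite_fiber_below_omega_one (f : Ordinal → ℕ) :
    ∃ α < ω₁, ∃ n, {ξ | ξ < α ∧ f ξ = n}.Infinite := by
  have hunc : ¬ (Iio ω₁).Countable := fun h => (countable_Iio_iff_lt_omega_one.1 h).false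
  obtain ⟨n, hn⟩ : ∃ n, (Iio ω₁ ∩ f ⁻¹' {n}).Infinite := by
    by_contra! h
    refine hunc ((countable_iUnion fun n => (h n).countable).mono fun ξ hξ => ?_)
    exact mem_iUnion.2 ⟨f ξ, hξ, rfl⟩
  let g := hn.natEmbedding
  refine ⟨⨆ i, ((g i : Ordinal) + 1), iSup_lt_omega_one fun i => ?_, n, ?_⟩
  · exact (isSuccLimit_omega 1).add_one_lt (g i).2.1
  · refine infinite_of_injective_forall_mem (f := fun i => (g i : Ordinal))
      (Subtype.val_injective.comp g.injective) fun i => ⟨?_, (g i).2.2⟩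
    exact (lt_add_one _).trans_le (Ordinal.le_iSup (fun i => (g i : Ordinal) + 1) i)

theorem not_exists_finite_ne_of_finite_fiber (e : Ordinal → Ordinal → ℕ)
    (he : ∀ α < ω₁, ∀ n, {ξ | ξ < α ∧ e α ξ = n}.Finite) :
    ¬ ∃ f : Ordinal → ℕ, ∀ α < ω₁, {ξ | ξ < α ∧ f ξ ≠ e α ξ}.Finite := by
  rintro ⟨f, hf⟩
  obtain ⟨α, hα, n, hinf⟩ := exists_infinite_fiber_below_omega_one f
  refine hinf (((hf α hα).union (he α hα n)).subset ?_)
  rintro ξ ⟨hξ, rfl⟩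
  by_cases h : f ξ = e α ξ
  · exact Or.inr ⟨hξ, h.symm⟩
  · exact Or.inl ⟨hξ, h⟩

section CoherentFamily

open scoped Classical

noncomputable def enumIio (α : Ordinal) : ℕ → Ordinal :=
  if h : (Iio α).Countable then enumerateCountable h 0 else fun _ => 0

theorem enumIio_lt_of_lt {α ξ : Ordinal} {n : ℕ} (h : ξ < enumIio α n) : enumIio α n < α := by
  unfold enumIio at h ⊢
  split_ifs at h ⊢ with hc
  · rcases range_enumerateCountable_subset hc 0 (mem_range_self n) with h0 | hlt
    · exact absurd (h0 ▸ h) (not_lt_zero (a := ξ))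
    · exact hlt
  · exact absurd h (not_lt_zero (a := ξ))

theorem exists_enumIio_eq {α β : Ordinal} (hα : α < ω₁) (hβ : β < α) : ∃ n, enumIio α n = β := by
  have hc := countable_Iio_iff_lt_omega_one.2 hα
  simpa only [enumIio, dif_pos hc, mem_range] using subset_range_enumerate hc 0 hβ

theorem eventually_exists_lt_enumIio {α : Ordinal} (hα : α < ω₁) :
    ∀ᶠ ξ in cofinite, ξ < α → ∃ n, ξ < enumIio α n := by
  simp only [eventually_cofinite, Classical.not_imp, not_exists, not_lt]
  refine Subsingleton.finite fun ξ ⟨hξ, hξ_le⟩ η ⟨hη, hη_le⟩ => ?_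
  by_contra hne
  rcases lt_or_gt_of_ne hne with hlt | hlt
  · obtain ⟨n, rfl⟩ := exists_enumIio_eq hα hη
    exact (hξ_le n).not_gt hlt
  · obtain ⟨n, rfl⟩ := exists_enumIio_eq hα hξ
    exact (hη_le n).not_gt hlt

theorem eventually_of_enumIio_lt {α : Ordinal} {n : ℕ} {p : Ordinal → Prop}
    (h : enumIio α n < α → ∀ᶠ ξ in cofinite, ξ < enumIio α n → p ξ) :
    ∀ᶠ ξ in cofinite, ξ < enumIio α n → p ξ :=
  if hn : enumIio α n < α then h hn else .of_forall fun _ hξ => absurd (enumIio_lt_of_lt hξ) hn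

noncomputable def coherentFamily (α ξ : Ordinal) : ℕ :=
  if h : ∃ n, ξ < enumIio α n then
    max (coherentFamily (enumIio α (Nat.find h)) ξ) (Nat.find h)
  else 0
termination_by α
decreasing_by exact enumIio_lt_of_lt (Nat.find_spec h)

theorem coherentFamily_eq {α ξ : Ordinal} (h : ∃ n, ξ < enumIio α n) :
    coherentFamily α ξ = max (coherentFamily (enumIio α (Nat.find h)) ξ) (Nat.find h) := by
  rw [coherentFamily, dif_pos h]

theorem eventually_lt_coherentFamily {α : Ordinal} (hα : α < ω₁) (k : ℕ) :
    ∀ᶠ ξ in cofinite, ξ < α → k < coherentFamily α ξ := by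
  induction α using WellFoundedLT.induction with
  | _ α IH =>
  have hsmall : ∀ᶠ ξ in cofinite, ∀ n ∈ Iic k, ξ < enumIio α n →
      k < coherentFamily (enumIio α n) ξ :=
    (finite_Iic k).eventually_all.2 fun n _ =>
      eventually_of_enumIio_lt fun hn => IH _ hn (hn.trans hα)
  filter_upwards [hsmall, eventually_exists_lt_enumIio hα] with ξ hsmall hcover hξ
  have hex := hcover hξ
  rw [coherentFamily_eq hex]
  by_cases hN : Nat.find hex ≤ k
  · exact lt_max_of_lt_left (hsmall _ hN (Nat.find_spec hex))
  · exact lt_max_of_lt_right (not_le.1 hN)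

theorem finite_coherentFamily_eq {α : Ordinal} (hα : α < ω₁) (k : ℕ) :
    {ξ | ξ < α ∧ coherentFamily α ξ = k}.Finite :=
  (eventually_cofinite.1 (eventually_lt_coherentFamily hα k)).subset
    fun _ ⟨hξ, hk⟩ h => (h hξ).ne' hk

theorem eventually_coherentFamily_eq {α β : Ordinal} (hα : α < ω₁) (hβ : β < α) :
    ∀ᶠ ξ in cofinite, ξ < β → coherentFamily α ξ = coherentFamily β ξ := by
  induction α using WellFoundedLT.induction generalizing β with
  | _ α IH =>
  have hpair : ∀ γ < α, ∀ δ < α, ∀ᶠ ξ in cofinite, ξ < γ → ξ < δ →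
      coherentFamily γ ξ = coherentFamily δ ξ := by
    intro γ hγ δ hδ
    rcases lt_trichotomy γ δ with hlt | rfl | hlt
    · filter_upwards [IH δ hδ (hδ.trans hα) hlt] with ξ h hγ _ using (h hγ).symm
    · exact .of_forall fun _ _ _ => rfl
    · filter_upwards [IH γ hγ (hγ.trans hα) hlt] with ξ h _ hδ using h hδ
  obtain ⟨m, rfl⟩ := exists_enumIio_eq hα hβ
  have hcoh : ∀ᶠ ξ in cofinite, ∀ n ∈ Iic m, ξ < enumIio α n → ξ < enumIio α m →
      coherentFamily (enumIio α n) ξ = coherentFamily (enumIio α m) ξ :=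
    (finite_Iic m).eventually_all.2 fun n _ =>
      eventually_of_enumIio_lt fun hn => hpair _ hn _ hβ
  filter_upwards [hcoh, eventually_lt_coherentFamily (hβ.trans hα) m] with ξ hcoh hlarge hξ
  have hex : ∃ n, ξ < enumIio α n := ⟨m, hξ⟩
  have hN : Nat.find hex ≤ m := Nat.find_min' hex hξ
  rw [coherentFamily_eq hex, hcoh _ hN (Nat.find_spec hex) hξ,
    max_eq_left (hN.trans (hlarge hξ).le)]

end CoherentFamily

/-- There exists a family `⟨e_α : α → ω | α < ω₁⟩` of functions indexed by
the countable ordinals (here represented as `e : Ordinal → Ordinal → ℕ`, with `e α` of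
interest only on `{ξ | ξ < α}`) such that: each `e_α` is finite-to-one; the family is
coherent (for `α < β < ω₁`, `e_β` and `e_α` disagree at only finitely many `ξ < α`); and the
family is nontrivial (no single `e : ω₁ → ω` agrees with each `e_α` modulo finite error). -/
theorem stmt_3 :
    ∃ e : Ordinal → Ordinal → ℕ,
      (∀ α < (aleph 1).ord, ∀ n : ℕ, {ξ : Ordinal | ξ < α ∧ e α ξ = n}.Finite) ∧
      (∀ α β : Ordinal, α < β → β < (aleph 1).ord →
        {ξ : Ordinal | ξ < α ∧ e β ξ ≠ e α ξ}.Finite) ∧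
      ¬ ∃ f : Ordinal → ℕ, ∀ α < (aleph 1).ord,
          {ξ : Ordinal | ξ < α ∧ f ξ ≠ e α ξ}.Finite := by
  rw [ord_aleph]
  refine ⟨coherentFamily, fun _ => finite_coherentFamily_eq, fun α β hαβ hβ => ?_,
    not_exists_finite_ne_of_finite_fiber coherentFamily fun _ => finite_coherentFamily_eq⟩
  simpa only [eventually_cofinite, Classical.not_imp] using eventually_coherentFamily_eq hβ hαβ
end

section
/- Let ⟨e_γ : γ → ω | γ < ω₁⟩ be a family of finite-to-one functions that is coherent (for all α < β < ω₁ the set {ξ < α : e_β(ξ) ≠ e_α(ξ)} is finite) and nontrivial (no e : ω₁ → ω satisfies that {ξ < α : e(ξ) ≠ e_α(ξ)} is finite for every α < ω₁). For each γ < ω₁ define τ_γ : ω × γ → ℤ by τ_γ(i,ξ) = 1 if e_γ(ξ) = i and τ_γ(i,ξ) = 0 otherwise. Then for every function φ : ω × ω₁ → ℤ there exist γ < ω₁, an infinite set Y ⊆ ω, and ordinals α_k < γ for k ∈ Y such that τ_γ(k, α_k) ≠ φ(k, α_k) for every k ∈ Y. -/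
open Cardinal Ordinal

/-!
If for every `γ < ω₁` the function `φ` differs from `τ_γ` in only finitely many rows, then,
since `ω₁` is regular and there are only countably many finite sets of rows, a single finite
set `s` contains these rows for cofinally many `γ`. For such `γ` and `ξ < γ` with `e_γ(ξ) ∉ s`,
the only row outside `s` in which `φ(·, ξ)` equals `1` is `e_γ(ξ)`. Reading that row off `φ`
defines `f : ω₁ → ω` which agrees with `e_γ` off the finite set `e_γ⁻¹(s)`, so by coherence it
agrees with every `e_α` up to a finite set, contradicting nontriviality.
-/

theorem exists_forall_cofinal_of_countable {β : Type*} [Countable β] {P : Ordinal → β → Prop}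
    (h : ∀ γ < ω₁, ∃ b, P γ b) : ∃ b, ∀ α < ω₁, ∃ γ, α < γ ∧ γ < ω₁ ∧ P γ b := by
  by_contra! hbounded
  choose a ha_lt ha using hbounded
  have hsup : (⨆ b, a b) + 1 < ω₁ :=
    (isSuccLimit_omega 1).add_one_lt (iSup_lt_omega_one ha_lt)
  obtain ⟨b, hb⟩ := h _ hsup
  exact ha b _ ((Ordinal.le_iSup a b).trans_lt (lt_add_one _)) hsup hb

theorem finite_ne_of_eq_off_finite_fibers {f g h : Ordinal → ℕ} {α γ : Ordinal} {s : Finset ℕ}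
    (hg : ∀ n, {ξ | ξ < γ ∧ g ξ = n}.Finite) (hgh : {ξ | ξ < α ∧ g ξ ≠ h ξ}.Finite)
    (hαγ : α ≤ γ) (hf : ∀ ξ < γ, g ξ ∉ s → f ξ = g ξ) :
    {ξ | ξ < α ∧ f ξ ≠ h ξ}.Finite := by
  refine (hgh.union (s.finite_toSet.biUnion fun n _ => hg n)).subset ?_
  rintro ξ ⟨hξα, hne⟩
  by_cases hgs : g ξ ∈ s
  · exact Or.inr (Set.mem_biUnion hgs ⟨hξα.trans_le hαγ, rfl⟩)
  · exact Or.inl ⟨hξα, by rwa [← hf ξ (hξα.trans_le hαγ) hgs]⟩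

def mismatchRows (tau : Ordinal → ℕ → Ordinal → ℤ) (phi : ℕ → Ordinal → ℤ) (γ : Ordinal) :
    Set ℕ :=
  {k | ∃ ξ < γ, tau γ k ξ ≠ phi k ξ}

open Classical in
noncomputable def rowOfOneOutside (phi : ℕ → Ordinal → ℤ) (s : Set ℕ) (ξ : Ordinal) : ℕ :=
  if h : ∃ k ∉ s, phi k ξ = 1 then h.choose else 0

section

variable {e : Ordinal → Ordinal → ℕ} {tau : Ordinal → ℕ → Ordinal → ℤ}
  {phi : ℕ → Ordinal → ℤ} {γ ξ : Ordinal}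

theorem eq_one_iff_of_notMem_mismatchRows
    (htau : ∀ i ξ, tau γ i ξ = if e γ ξ = i then 1 else 0) {k : ℕ}
    (hk : k ∉ mismatchRows tau phi γ) (hξ : ξ < γ) : phi k ξ = 1 ↔ e γ ξ = k := by
  have hagree : tau γ k ξ = phi k ξ := by
    by_contra hne
    exact hk ⟨ξ, hξ, hne⟩
  rw [← hagree, htau]
  by_cases h : e γ ξ = k <;> simp [h]

theorem rowOfOneOutside_eq (htau : ∀ i ξ, tau γ i ξ = if e γ ξ = i then 1 else 0)
    {s : Set ℕ} (hs : mismatchRows tau phi γ ⊆ s) (hξ : ξ < γ) (he : e γ ξ ∉ s) :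
    rowOfOneOutside phi s ξ = e γ ξ := by
  have hex : ∃ k ∉ s, phi k ξ = 1 :=
    ⟨e γ ξ, he, (eq_one_iff_of_notMem_mismatchRows htau (fun h => he (hs h)) hξ).2 rfl⟩
  rw [rowOfOneOutside, dif_pos hex]
  obtain ⟨hk, hk_one⟩ := hex.choose_spec
  exact ((eq_one_iff_of_notMem_mismatchRows htau (fun h => hk (hs h)) hξ).1 hk_one).symm

end

/-- Let `⟨e_γ : γ → ω | γ < ω₁⟩` be a coherent nontrivial family of
finite-to-one functions, and for `γ < ω₁` let `τ_γ : ω × γ → ℤ` be given by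
`τ_γ (i, ξ) = 1` if `e_γ ξ = i` and `0` otherwise.  Then for every `φ : ω × ω₁ → ℤ` there
are `γ < ω₁`, an infinite `Y ⊆ ω` and ordinals `α_k < γ` for `k ∈ Y` with
`τ_γ (k, α_k) ≠ φ (k, α_k)` for every `k ∈ Y`. -/
theorem stmt_4 (e : Ordinal → Ordinal → ℕ)
    (hfto : ∀ γ < (aleph 1).ord, ∀ n : ℕ, {ξ : Ordinal | ξ < γ ∧ e γ ξ = n}.Finite)
    (hcoh : ∀ α β : Ordinal, α < β → β < (aleph 1).ord →
      {ξ : Ordinal | ξ < α ∧ e β ξ ≠ e α ξ}.Finite)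
    (hnontriv : ¬ ∃ f : Ordinal → ℕ, ∀ α < (aleph 1).ord,
      {ξ : Ordinal | ξ < α ∧ f ξ ≠ e α ξ}.Finite)
    (tau : Ordinal → ℕ → Ordinal → ℤ)
    (htau : ∀ γ i ξ, tau γ i ξ = if e γ ξ = i then 1 else 0)
    (phi : ℕ → Ordinal → ℤ) :
    ∃ γ < (aleph 1).ord, ∃ Y : Set ℕ, Y.Infinite ∧ ∃ a : ℕ → Ordinal,
      ∀ k ∈ Y, a k < γ ∧ tau γ k (a k) ≠ phi k (a k) := by
  simp only [ord_aleph] at hfto hcoh hnontriv ⊢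
  by_cases hfin : ∀ γ < ω₁, (mismatchRows tau phi γ).Finite
  · obtain ⟨s, hs⟩ := exists_forall_cofinal_of_countable
      (P := fun γ (s : Finset ℕ) => mismatchRows tau phi γ ⊆ s) fun γ hγ =>
        ⟨(hfin γ hγ).toFinset, (hfin γ hγ).coe_toFinset.superset⟩
    refine absurd ⟨rowOfOneOutside phi s, fun α hα => ?_⟩ hnontriv
    obtain ⟨γ, hαγ, hγ, hγs⟩ := hs α hα
    exact finite_ne_of_eq_off_finite_fibers (hfto γ hγ) (hcoh α γ hαγ hγ) hαγ.le
      fun ξ hξ he => rowOfOneOutside_eq (htau γ) hγs hξ he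
  · obtain ⟨γ, hγ, hinf⟩ := not_forall₂.mp hfin
    choose! a ha using fun k (hk : k ∈ mismatchRows tau phi γ) => hk
    exact ⟨γ, hγ, _, hinf, a, ha⟩
end

section
/- Let n ≥ 1, let H be an abelian group, and let I and J be types such that I is finite or J is finite. Then every n-coherent family ⟨φ_{f⃗} : X(f⃗) → H : f⃗ ∈ (I → [J]^{<ω})^n⟩ is n-trivial. -/
open scoped BigOperators

namespace Stmt

variable {I J H : Type*} [AddCommGroup H]

/-- `X(f) = {(i,j) : j ∈ f i}` for `f : I → [J]^{<ω}`. -/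
def XSet (f : I → Finset J) : Set (I × J) := {x : I × J | x.2 ∈ f x.1}

/-- `X(f⃗) = ⋂ k X(f⃗ k)` for a tuple `f⃗` of functions `I → [J]^{<ω}`. -/
def XTup {n : ℕ} (F : Fin n → I → Finset J) : Set (I × J) := {x : I × J | ∀ k, x.2 ∈ F k x.1}

/-- A family indexed by `n`-tuples is alternating if permuting the tuple multiplies the
associated function by the sign of the permutation (on the common domain `X(f⃗)`). -/
def IsAlternating {n : ℕ} (φ : (Fin n → I → Finset J) → I × J → H) : Prop :=
  ∀ σ : Equiv.Perm (Fin n), ∀ F : Fin n → I → Finset J, ∀ x ∈ XTup F,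
    φ (F ∘ σ) x = ((Equiv.Perm.sign σ : ℤˣ) : ℤ) • φ F x

/-- `n`-coherence (for `n = m + 1 ≥ 1`): the family is alternating and for every
`(n+1)`-tuple `f⃗` the alternating sum `∑ i (-1)^i φ_{f⃗^i}` vanishes at all but finitely
many points of `X(f⃗)`. -/
def IsNCoherent {m : ℕ} (φ : (Fin (m + 1) → I → Finset J) → I × J → H) : Prop :=
  IsAlternating φ ∧
    ∀ F : Fin (m + 2) → I → Finset J,
      {x ∈ XTup F |
        ∑ i : Fin (m + 2), ((-1 : ℤ) ^ (i : ℕ)) • φ (Fin.removeNth i F) x ≠ 0}.Finite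

/-- `n`-triviality (for `n = m + 1 ≥ 1`): there is an alternating family `ψ` indexed by
`(n-1)`-tuples such that for every `n`-tuple `f⃗` the function
`∑ i (-1)^i ψ_{f⃗^i} - φ_{f⃗}` vanishes at all but finitely many points of `X(f⃗)`. -/
def IsNTrivial {m : ℕ} (φ : (Fin (m + 1) → I → Finset J) → I × J → H) : Prop :=
  ∃ ψ : (Fin m → I → Finset J) → I × J → H, IsAlternating ψ ∧
    ∀ F : Fin (m + 1) → I → Finset J,
      {x ∈ XTup F |
        (∑ i : Fin (m + 1), ((-1 : ℤ) ^ (i : ℕ)) • ψ (Fin.removeNth i F) x) - φ F x ≠ 0}.Finite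

end Stmt

open Stmt

/-- Let `n = m + 1 ≥ 1`, let `H` be an abelian group, and let `I` and `J`
be types such that `I` is finite or `J` is finite.  Then every `n`-coherent family
`⟨φ_{f⃗} : X(f⃗) → H⟩` indexed by `n`-tuples `f⃗` of functions `I → [J]^{<ω}` is `n`-trivial. -/
theorem stmt_6 (m : ℕ) (H : Type*) [AddCommGroup H] (I J : Type*)
    (hIJ : Finite I ∨ Finite J)
    (φ : (Fin (m + 1) → I → Finset J) → I × J → H)
    (hφ : IsNCoherent φ) :
    IsNTrivial φ := by
  obtain hI | hJ := hIJ
  · -- `I` finite: every `XTup F` is finite, so `ψ = 0` works.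
    refine ⟨fun _ _ => 0, ?_, ?_⟩
    · intro σ F x _; simp
    · intro F
      have hfin : (XTup F).Finite := by
        have hsub : XTup F ⊆ ⋃ i : I, ({i} ×ˢ ((F 0 i : Finset J) : Set J)) := by
          intro x hx
          exact Set.mem_iUnion.2 ⟨x.1, ⟨rfl, hx 0⟩⟩
        exact (Set.finite_iUnion fun i =>
          (Set.finite_singleton i).prod (F 0 i).finite_toSet).subset hsub
      exact hfin.subset (Set.sep_subset _ _)
  · -- `J` finite: use the maximal function `fmax : I → Finset J`.
    have : Fintype J := Fintype.ofFinite J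
    set fmax : I → Finset J := fun _ => Finset.univ with hfmax
    refine ⟨fun G => φ (Fin.cons fmax G), ?_, ?_⟩
    · -- alternating
      intro σ G x hx
      have hmem : x ∈ XTup (Fin.cons fmax G) := by
        intro k
        refine Fin.cases ?_ ?_ k
        · simp [hfmax]
        · intro l; simpa using hx l
      have hcomp : Fin.cons fmax (G ∘ σ)
          = (Fin.cons fmax G) ∘ (Equiv.Perm.decomposeFin.symm (0, σ)) := by
        funext k
        refine Fin.cases ?_ ?_ k
        · simp
        · intro l; simp
      have hsign : Equiv.Perm.sign (Equiv.Perm.decomposeFin.symm ((0 : Fin (m+1)), σ))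
          = Equiv.Perm.sign σ := by
        simp
      calc φ (Fin.cons fmax (G ∘ σ)) x
          = φ ((Fin.cons fmax G) ∘ (Equiv.Perm.decomposeFin.symm (0, σ))) x := by rw [hcomp]
        _ = ((Equiv.Perm.sign (Equiv.Perm.decomposeFin.symm ((0 : Fin (m+1)), σ)) : ℤˣ) : ℤ)
              • φ (Fin.cons fmax G) x := hφ.1 _ _ x hmem
        _ = ((Equiv.Perm.sign σ : ℤˣ) : ℤ) • φ (Fin.cons fmax G) x := by rw [hsign]
    · intro F
      set F' : Fin (m + 2) → I → Finset J := Fin.cons fmax F with hF'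
      have h0 : Fin.removeNth 0 F' = F := by
        rw [Fin.removeNth_zero, hF', Fin.tail_cons]
      have hsucc : ∀ j : Fin (m+1),
          Fin.removeNth (Fin.succ j) F' = Fin.cons fmax (Fin.removeNth j F) := by
        intro j; funext k
        refine Fin.cases ?_ ?_ k
        · simp [Fin.removeNth, hF']
        · intro l; simp [Fin.removeNth, Fin.succ_succAbove_succ, hF']
      have hS : ∀ x : I × J,
          (∑ i : Fin (m + 2), ((-1 : ℤ) ^ (i : ℕ)) • φ (Fin.removeNth i F') x)
          = φ F x - ((∑ j : Fin (m + 1),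
              ((-1 : ℤ) ^ (j : ℕ)) • φ (Fin.cons fmax (Fin.removeNth j F)) x)) := by
        intro x
        rw [Fin.sum_univ_succ, h0]
        simp only [hsucc, Fin.val_succ, pow_succ, mul_neg_one, neg_smul,
          Finset.sum_neg_distrib, Fin.val_zero, pow_zero, one_smul]
        abel
      have hcoh := hφ.2 F'
      refine hcoh.subset ?_
      rintro x ⟨hx, hne⟩
      refine ⟨?_, ?_⟩
      · intro k
        refine Fin.cases ?_ ?_ k
        · simp [hF', hfmax]
        · intro l; simpa [hF'] using hx l
      · rw [hS x]
        intro h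
        apply hne
        have := sub_eq_zero.mp h
        rw [sub_eq_zero] at h ⊢
        exact h.symm
end

section
/- Let n ≥ 1, let H be an abelian group, and suppose there exist injections I → I′ and J → J′ of types. If there exists an n-coherent family ⟨φ_{f⃗} : X(f⃗) → H : f⃗ ∈ (I → [J]^{<ω})^n⟩ that is not n-trivial, then there exists an n-coherent family ⟨ψ_{f⃗} : X(f⃗) → H : f⃗ ∈ (I′ → [J′]^{<ω})^n⟩ that is not n-trivial. -/
open scoped BigOperators

/-!
Write `e = eI × eJ : I × J ↪ I' × J'`. Pulling `f' : I' → [J']^{<ω}` back along the two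
injections gives `f : I → [J]^{<ω}` with `X(f) = e⁻¹ X(f')`, so a family `φ` on `(I, J)`
extends to `(I', J')` by `ψ_{f⃗'}(e p) = φ_{f⃗}(p)` and `ψ = 0` off the range of `e`.
Coboundaries commute with this extension, so `ψ` inherits `n`-coherence. Conversely,
pushing tuples forward is a section of pulling back, and restricting a trivialising family
of `ψ` along it trivialises `φ`.
-/

noncomputable section

namespace Stmt

open Function

variable {I I' J J' H : Type*} [AddCommGroup H] {eI : I → I'} {eJ : J → J'}

def coboundary {n : ℕ} (φ : (Fin n → I → Finset J) → I × J → H)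
    (F : Fin (n + 1) → I → Finset J) (x : I × J) : H :=
  ∑ i : Fin (n + 1), ((-1 : ℤ) ^ (i : ℕ)) • φ (Fin.removeNth i F) x

section FinsetValued

def comapFinset (eI : I → I') (heJ : Injective eJ) (f : I' → Finset J') : I → Finset J :=
  fun i => (f (eI i)).preimage eJ heJ.injOn

def mapFinset (eI : I → I') (heJ : Injective eJ) (f : I → Finset J) : I' → Finset J' :=
  extend eI (fun i => (f i).map ⟨eJ, heJ⟩) fun _ => ∅

theorem leftInverse_comapFinset_mapFinset (heI : Injective eI) (heJ : Injective eJ) :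
    LeftInverse (comapFinset eI heJ) (mapFinset (J := J) eI heJ) := by
  intro f
  funext i
  ext j
  simp [comapFinset, mapFinset, heI.extend_apply]

theorem mem_XTup_comapFinset (heJ : Injective eJ) {n : ℕ} (F : Fin n → I' → Finset J')
    (p : I × J) : p ∈ XTup (comapFinset eI heJ ∘ F) ↔ Prod.map eI eJ p ∈ XTup F := by
  simp [XTup, comapFinset]

theorem mem_XTup_mapFinset (heI : Injective eI) (heJ : Injective eJ) {n : ℕ}
    (F : Fin n → I → Finset J) (p : I × J) :
    Prod.map eI eJ p ∈ XTup (mapFinset eI heJ ∘ F) ↔ p ∈ XTup F := by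
  simp [XTup, mapFinset, heI.extend_apply]

end FinsetValued

section Families

variable {n : ℕ}

def extendFamily (eI : I → I') (heJ : Injective eJ) (φ : (Fin n → I → Finset J) → I × J → H) :
    (Fin n → I' → Finset J') → I' × J' → H :=
  fun F => extend (Prod.map eI eJ) (φ (comapFinset eI heJ ∘ F)) 0

def restrictFamily (eI : I → I') (heJ : Injective eJ)
    (ψ : (Fin n → I' → Finset J') → I' × J' → H) : (Fin n → I → Finset J) → I × J → H :=
  fun F p => ψ (mapFinset eI heJ ∘ F) (Prod.map eI eJ p)

variable (heI : Injective eI) (heJ : Injective eJ)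

include heI in
theorem extendFamily_apply (φ : (Fin n → I → Finset J) → I × J → H)
    (F : Fin n → I' → Finset J') (p : I × J) :
    extendFamily eI heJ φ F (Prod.map eI eJ p) = φ (comapFinset eI heJ ∘ F) p :=
  (heI.prodMap heJ).extend_apply _ _ p

theorem extendFamily_apply_of_notMem_range (φ : (Fin n → I → Finset J) → I × J → H)
    (F : Fin n → I' → Finset J') {x : I' × J'} (hx : x ∉ Set.range (Prod.map eI eJ)) :
    extendFamily eI heJ φ F x = 0 :=
  extend_apply' _ _ _ hx

include heI in
theorem coboundary_extendFamily (φ : (Fin n → I → Finset J) → I × J → H)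
    (F : Fin (n + 1) → I' → Finset J') (p : I × J) :
    coboundary (extendFamily eI heJ φ) F (Prod.map eI eJ p) =
      coboundary φ (comapFinset eI heJ ∘ F) p := by
  simp only [coboundary, extendFamily_apply heI]
  rfl

theorem coboundary_extendFamily_of_notMem_range (φ : (Fin n → I → Finset J) → I × J → H)
    (F : Fin (n + 1) → I' → Finset J') {x : I' × J'} (hx : x ∉ Set.range (Prod.map eI eJ)) :
    coboundary (extendFamily eI heJ φ) F x = 0 := by
  simp [coboundary, extendFamily_apply_of_notMem_range heJ _ _ hx]

include heI in
theorem IsAlternating.extendFamily {φ : (Fin n → I → Finset J) → I × J → H}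
    (hφ : IsAlternating φ) : IsAlternating (extendFamily eI heJ φ) := by
  intro σ F x hx
  by_cases hxe : x ∈ Set.range (Prod.map eI eJ)
  · obtain ⟨p, rfl⟩ := hxe
    rw [extendFamily_apply heI, extendFamily_apply heI]
    exact hφ σ _ p ((mem_XTup_comapFinset heJ F p).2 hx)
  · rw [extendFamily_apply_of_notMem_range heJ _ _ hxe,
      extendFamily_apply_of_notMem_range heJ _ _ hxe, smul_zero]

include heI in
theorem IsAlternating.restrictFamily {ψ : (Fin n → I' → Finset J') → I' × J' → H}
    (hψ : IsAlternating ψ) : IsAlternating (restrictFamily eI heJ ψ) :=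
  fun σ F p hp => hψ σ _ _ ((mem_XTup_mapFinset heI heJ F p).2 hp)

end Families

variable (heI : Injective eI) (heJ : Injective eJ) {m : ℕ}

include heI in
theorem IsNCoherent.extendFamily {φ : (Fin (m + 1) → I → Finset J) → I × J → H}
    (hφ : IsNCoherent φ) : IsNCoherent (extendFamily eI heJ φ) := by
  refine ⟨hφ.1.extendFamily heI heJ, fun F => ?_⟩
  refine ((hφ.2 (comapFinset eI heJ ∘ F)).image (Prod.map eI eJ)).subset ?_
  rintro x ⟨hx, hδ⟩
  change coboundary _ F x ≠ 0 at hδ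
  obtain ⟨p, rfl⟩ : x ∈ Set.range (Prod.map eI eJ) := by
    by_contra hxe
    exact hδ (coboundary_extendFamily_of_notMem_range heJ φ F hxe)
  rw [coboundary_extendFamily heI] at hδ
  exact ⟨p, ⟨(mem_XTup_comapFinset heJ F p).2 hx, hδ⟩, rfl⟩

include heI in
theorem IsNTrivial.of_extendFamily {φ : (Fin (m + 1) → I → Finset J) → I × J → H}
    (hψ : IsNTrivial (extendFamily eI heJ φ)) : IsNTrivial φ := by
  obtain ⟨χ, hχ, hχψ⟩ := hψ
  refine ⟨restrictFamily eI heJ χ, hχ.restrictFamily heI heJ, fun F => ?_⟩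
  refine ((hχψ (mapFinset eI heJ ∘ F)).preimage (heI.prodMap heJ).injOn).subset ?_
  rintro p ⟨hp, hδ⟩
  refine ⟨(mem_XTup_mapFinset heI heJ F p).2 hp, ?_⟩
  have hcomap : comapFinset eI heJ ∘ (mapFinset eI heJ ∘ F) = F :=
    funext fun k => leftInverse_comapFinset_mapFinset heI heJ (F k)
  change coboundary χ _ _ - extendFamily eI heJ φ _ _ ≠ 0
  rwa [extendFamily_apply heI, hcomap]

end Stmt

end

open Stmt

/-- Let `n = m + 1 ≥ 1`, let `H` be an abelian group, and suppose there are
injections `I → I\'` and `J → J\'`.  If there is an `n`-coherent family for `(I, J)` with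
values in `H` that is not `n`-trivial, then there is an `n`-coherent family for `(I\', J\')`
with values in `H` that is not `n`-trivial. -/
theorem stmt_7 (m : ℕ) (H : Type*) [AddCommGroup H] (I I' J J' : Type*)
    (eI : I → I') (heI : Function.Injective eI)
    (eJ : J → J') (heJ : Function.Injective eJ)
    (h : ∃ φ : (Fin (m + 1) → I → Finset J) → I × J → H, IsNCoherent φ ∧ ¬ IsNTrivial φ) :
    ∃ ψ : (Fin (m + 1) → I' → Finset J') → I' × J' → H, IsNCoherent ψ ∧ ¬ IsNTrivial ψ := by
  obtain ⟨φ, hcoh, hnt⟩ := h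
  exact ⟨extendFamily eI heJ φ, hcoh.extendFamily heI heJ,
    fun htriv => hnt (htriv.of_extendFamily heI heJ)⟩
end

section
/- Let n ≥ 1, let S be a set, let K be an abelian group, and let β be an ordinal whose cofinality is at most ℵ_{n−1}. Then every n-coherent family ⟨φ_{α⃗} : S × α₀ → K⟩, indexed by the strictly increasing n-tuples of ordinals below β and coherent modulo finitely many rows, is trivial. -/
/-!
Induction on `n`. On a successor ordinal `γ + 1` a coherent family is trivialized by the cone
`A ↦ ± φ (A, γ)`. For `n = 1` and `cf δ = ω`, with `c j` cofinal in `δ`, the function whose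
column `ξ` is copied from `φ (c j)` for the least `j` with `ξ < c j` is a trivialization: below
any `α ≤ c J` only the finitely many indices `j ≤ J` occur.

For `n + 1` and a limit `δ` with `cf δ ≤ ℵ_n`, take a continuous monotone ladder `D ν`
(`ν ≤ cf δ`) with top `δ`, whose rungs below the top have cofinality `< cf δ`, hence
`≤ ℵ_(n-1)`. By transfinite recursion choose trivializations `ψ ν` of `φ` below `D ν` that
agree, modulo finitely many rows, with every earlier `ψ ν'` on tuples below `D ν'`. At a
successor rung, a fresh trivialization differs from the previous one by an `n`-coherent family
on the previous rung, which is trivial by induction; subtracting the coboundary of its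
trivialization restores agreement, since `d ∘ d = 0`. At a limit rung, glue: read each tuple
off the first rung above it.
-/

open Finset Cardinal

universe u

namespace CoherentFamily

section Coboundary

variable {X M : Type*} [AddCommGroup M] {n : ℕ}

def coboundary : ((Fin n → X) → M) →+ ((Fin (n + 1) → X) → M) where
  toFun φ B := ∑ i : Fin (n + 1), ((-1 : ℤ) ^ (i : ℕ)) • φ (Fin.removeNth i B)
  map_zero' := by ext; simp
  map_add' φ ψ := by ext; simp [smul_add, Finset.sum_add_distrib]

theorem coboundary_apply (φ : (Fin n → X) → M) (B : Fin (n + 1) → X) :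
    coboundary φ B = ∑ i : Fin (n + 1), ((-1 : ℤ) ^ (i : ℕ)) • φ (Fin.removeNth i B) :=
  rfl

theorem neg_one_pow_succAbove_add_predAbove (j : Fin (n + 2)) (i : Fin (n + 1)) :
    (-1 : ℤ) ^ ((j.succAbove i : ℕ) + (i.predAbove j : ℕ)) = -(-1) ^ ((j : ℕ) + i) := by
  have key : ∀ a b : ℕ, a + 1 = b ∨ a = b + 1 → (-1 : ℤ) ^ a = -(-1) ^ b := by
    rintro a b (rfl | rfl) <;> simp [pow_succ]
  apply key
  rcases lt_or_ge i.castSucc j with h | h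
  · have : (i : ℕ) < j := h
    simp only [Fin.succAbove_of_castSucc_lt _ _ h, Fin.predAbove_of_castSucc_lt _ _ h,
      Fin.val_castSucc, Fin.val_pred]
    omega
  · have : (j : ℕ) ≤ i := h
    simp only [Fin.succAbove_of_le_castSucc _ _ h, Fin.predAbove_of_le_castSucc _ _ h,
      Fin.val_succ, Fin.coe_castPred]
    omega

theorem coboundary_coboundary (φ : (Fin n → X) → M) : coboundary (coboundary φ) = 0 := by
  ext B
  rw [coboundary_apply, Pi.zero_apply]
  simp_rw [coboundary_apply, smul_sum, smul_smul, ← pow_add]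
  rw [← sum_product']
  refine sum_ninvolution (fun p => (p.1.succAbove p.2, p.2.predAbove p.1)) (fun p => ?_)
    (fun p _ hp => ?_) (fun _ => mem_univ _) (fun p => ?_)
  · rw [neg_one_pow_succAbove_add_predAbove, ← Fin.removeNth_removeNth_eq_swap, neg_smul,
      add_neg_cancel]
  · exact Fin.succAbove_ne p.1 p.2 (congrArg Prod.fst hp)
  · simp [Fin.succAbove_succAbove_predAbove, Fin.predAbove_predAbove_succAbove]

end Coboundary

section Cone

variable {X : Type*} {n : ℕ}

theorem removeNth_castSucc_snoc (B : Fin (n + 1) → X) (γ : X) (i : Fin (n + 1)) :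
    Fin.removeNth i.castSucc (Fin.snoc B γ : Fin (n + 2) → X) =
      Fin.snoc (Fin.removeNth i B) γ := by
  funext j
  induction j using Fin.lastCases with
  | last =>
    have : i.castSucc.succAbove (Fin.last n) = Fin.last (n + 1) := by
      rw [Fin.succAbove_of_le_castSucc _ _ (Fin.castSucc_le_castSucc_iff.2 (Fin.le_last i)),
        Fin.succ_last]
    simp [Fin.removeNth_apply, this]
  | cast j => simp [Fin.removeNth_apply, Fin.castSucc_succAbove_castSucc]

variable [LinearOrder X] {M : Type*} [AddCommGroup M]

-- The guard kills every face that still contains `γ`, so on a tuple ending in `γ` only the face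
-- dropping `γ` survives (`coboundary_cone_of_last_eq`).
def cone (γ : X) (θ : (Fin (n + 1) → X) → M) : (Fin n → X) → M :=
  fun A => if ∀ l, A l < γ then θ (Fin.snoc (α := fun _ => X) A γ) else 0

theorem coboundary_cone_of_forall_lt (γ : X) (θ : (Fin (n + 1) → X) → M)
    {B : Fin (n + 1) → X} (hB : ∀ i, B i < γ) :
    coboundary (cone γ θ) B =
      coboundary θ (Fin.snoc (α := fun _ => X) B γ) + (-1 : ℤ) ^ n • θ B := by
  have hfaces : ∀ i, cone γ θ (Fin.removeNth i B) =
      θ (Fin.removeNth i.castSucc (Fin.snoc (α := fun _ => X) B γ)) := fun i => by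
    rw [cone, if_pos (show ∀ l, Fin.removeNth i B l < γ from fun l => hB _),
      removeNth_castSucc_snoc]
  rw [coboundary_apply, coboundary_apply (n := n + 1), Fin.sum_univ_castSucc (n := n + 1)]
  simp only [hfaces, Fin.val_castSucc, Fin.val_last, Fin.removeNth_last, Fin.init_snoc,
    pow_succ, mul_neg_one, neg_smul, neg_add_cancel_right]

theorem coboundary_cone_of_last_eq (θ : (Fin (n + 1) → X) → M) {B : Fin (n + 1) → X}
    (hB : StrictMono B) : coboundary (cone (B (Fin.last n)) θ) B = (-1 : ℤ) ^ n • θ B := by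
  rw [coboundary_apply, Fintype.sum_eq_single (Fin.last n)]
  · rw [cone, if_pos (show ∀ l, Fin.removeNth (Fin.last n) B l < B (Fin.last n) from
      fun l => hB (by simp [Fin.castSucc_lt_last])), Fin.removeNth_last, Fin.snoc_init_self,
      Fin.val_last]
  · intro i hi
    obtain ⟨l, hl⟩ := Fin.exists_succAbove_eq (Ne.symm hi)
    rw [cone, if_neg fun h => (h l).ne (by rw [Fin.removeNth_apply, hl]), smul_zero]

end Cone

theorem exists_seq_of_extend {α X : Type*} [LT α] [WellFoundedLT α] [Nonempty X]
    (Q : α → X → (α → X) → Prop)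
    (hQ : ∀ a x f g, (∀ b < a, f b = g b) → Q a x f → Q a x g)
    (hext : ∀ a f, (∀ b < a, Q b (f b) f) → ∃ x, Q a x f) :
    ∃ f : α → X, ∀ a, Q a (f a) f := by
  classical
  let F : ∀ a, (∀ b < a, X) → X := fun a rec =>
    Classical.epsilon fun x => Q a x fun b => if h : b < a then rec b h else x
  set f := wellFounded_lt.fix F
  refine ⟨f, fun a => wellFounded_lt.induction (C := fun a => Q a (f a) f) a fun a ih => ?_⟩
  obtain ⟨x, hx⟩ := hext a f ih
  have key : Q a (F a fun b _ => f b) fun b => if b < a then f b else F a fun b _ => f b :=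
    Classical.epsilon_spec (p := fun x => Q a x fun b => if b < a then f b else x)
      ⟨x, hQ a x _ _ (fun b hb => (if_pos hb).symm) hx⟩
  rw [← wellFounded_lt.fix_eq F a] at key
  exact hQ a _ _ f (fun b hb => if_pos hb) key

section Ordinals

theorem exists_nat_cofinal {δ : Ordinal.{u}} (hδ : δ.cof ≤ ℵ₀) (h0 : δ ≠ 0) :
    ∃ c : ℕ → Ordinal.{u}, (∀ j, c j < δ) ∧ ∀ α < δ, ∃ j, α ≤ c j := by
  obtain ⟨g, hg⟩ := Ordinal.exists_isFundamentalSeq (o := δ) rfl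
  have : Countable (Set.Iio δ.cof.ord) := by
    rwa [← mk_le_aleph0_iff, Cardinal.mk_Iio_ordinal, lift_le_aleph0, card_ord]
  have : Nonempty (Set.Iio δ.cof.ord) := ⟨⟨0, by simpa [pos_iff_ne_zero] using h0⟩⟩
  obtain ⟨e, he⟩ := exists_surjective_nat (Set.Iio δ.cof.ord)
  refine ⟨fun j => g (e j), fun j => (g (e j)).2, fun α hα => ?_⟩
  obtain ⟨_, ⟨i, rfl⟩, hi⟩ := hg.isCofinal_range ⟨α, hα⟩
  obtain ⟨j, rfl⟩ := he i
  exact ⟨j, hi⟩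

noncomputable def ladder (e : Ordinal.{u} → Ordinal.{u}) (ν : Ordinal.{u}) : Ordinal.{u} :=
  ⨆ i : Set.Iio ν, e i + 1

theorem lt_ladder_iff {e : Ordinal.{u} → Ordinal.{u}} {ν α : Ordinal.{u}} :
    α < ladder e ν ↔ ∃ i < ν, α ≤ e i := by
  simp [ladder]

theorem ladder_mono (e : Ordinal.{u} → Ordinal.{u}) : Monotone (ladder e) := fun _ _ h =>
  le_of_forall_lt fun _ hα =>
    let ⟨i, hi, hαi⟩ := lt_ladder_iff.1 hα
    lt_ladder_iff.2 ⟨i, hi.trans_le h, hαi⟩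

theorem exists_lt_ladder_of_isSuccPrelimit {e : Ordinal.{u} → Ordinal.{u}} {μ α : Ordinal.{u}}
    (hμ : Order.IsSuccPrelimit μ) (hα : α < ladder e μ) : ∃ ν < μ, α < ladder e ν :=
  let ⟨i, hi, hαi⟩ := lt_ladder_iff.1 hα
  ⟨Order.succ i, hμ.succ_lt hi, lt_ladder_iff.2 ⟨i, Order.lt_succ i, hαi⟩⟩

theorem cof_ladder {e : Ordinal.{u} → Ordinal.{u}} {ν : Ordinal.{u}}
    (he : StrictMonoOn e (Set.Iio ν)) : (ladder e ν).cof = ν.cof :=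
  Ordinal.cof_iSup_Iio_add_one fun i j hij => he i.2 j.2 hij

theorem exists_ladder (δ : Ordinal.{u}) :
    ∃ D : Ordinal.{u} → Ordinal.{u}, Monotone D ∧ D δ.cof.ord = δ ∧
      (∀ ν < δ.cof.ord, D ν < δ ∧ (D ν).cof = ν.cof) ∧
      ∀ μ, Order.IsSuccPrelimit μ → ∀ α < D μ, ∃ ν < μ, α < D ν := by
  obtain ⟨g, hg⟩ := Ordinal.exists_isFundamentalSeq (o := δ) rfl
  let e : Ordinal.{u} → Ordinal.{u} := fun ν => if h : ν < δ.cof.ord then g ⟨ν, h⟩ else 0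
  have he : StrictMonoOn e (Set.Iio δ.cof.ord) := fun a ha b hb hab => by
    simpa only [e, dif_pos (show a < _ from ha), dif_pos (show b < _ from hb)] using
      Subtype.coe_lt_coe.2 (hg.strictMono (show (⟨a, ha⟩ : Set.Iio _) < ⟨b, hb⟩ from hab))
  have htop : ladder e δ.cof.ord = δ :=
    (iSup_congr fun i : Set.Iio δ.cof.ord => by
      simp only [e, dif_pos (show (i : Ordinal) < δ.cof.ord from i.2)]).trans hg.iSup_add_one_eq
  refine ⟨ladder e, ladder_mono e, htop, fun ν hν => ?_,
    fun μ hμ α hα => exists_lt_ladder_of_isSuccPrelimit hμ hα⟩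
  have hcof := cof_ladder (he.mono (Set.Iio_subset_Iio hν.le))
  refine ⟨((ladder_mono e hν.le).trans_eq htop).lt_of_ne fun h => ?_, hcof⟩
  have hlt := (Ordinal.cof_le_card ν).trans_lt (lt_ord.1 hν)
  rw [← hcof, h] at hlt
  exact hlt.false

end Ordinals

-- `φ A s ξ` is the paper's `φ_A(s, ξ)`; only strictly increasing `A` and columns `ξ < A 0`
-- matter.
abbrev Family (S K : Type*) (n : ℕ) := (Fin n → Ordinal.{u}) → S → Ordinal.{u} → K

section Families

variable {S K : Type*} [AddCommGroup K] {n : ℕ}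

def rowFinite (b : Ordinal.{u}) : AddSubgroup (S → Ordinal.{u} → K) where
  carrier := {θ | {s | ∃ ξ < b, θ s ξ ≠ 0}.Finite}
  zero_mem' := by simp
  add_mem' {θ θ'} h h' := (h.union h').subset fun s ⟨ξ, hξ, hne⟩ => by
    by_cases h0 : θ s ξ = 0
    · exact Or.inr ⟨ξ, hξ, by simpa [h0] using hne⟩
    · exact Or.inl ⟨ξ, hξ, h0⟩
  neg_mem' := by simp

theorem mem_rowFinite {b : Ordinal.{u}} {θ : S → Ordinal.{u} → K} :
    θ ∈ rowFinite b ↔ {s | ∃ ξ < b, θ s ξ ≠ 0}.Finite :=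
  Iff.rfl

theorem rowFinite_anti : Antitone (rowFinite (S := S) (K := K)) :=
  fun _ _ hb _ hθ => hθ.subset fun _ ⟨ξ, hξ, hne⟩ => ⟨ξ, hξ.trans_le hb, hne⟩

def famRowFinite (δ : Ordinal.{u}) : AddSubgroup (Family S K (n + 1)) where
  carrier := {θ | ∀ B : Fin (n + 1) → Ordinal, StrictMono B → (∀ i, B i < δ) →
    θ B ∈ rowFinite (B 0)}
  zero_mem' _ _ _ := zero_mem _
  add_mem' hθ hθ' B hB hδ := add_mem (hθ B hB hδ) (hθ' B hB hδ)
  neg_mem' hθ B hB hδ := neg_mem (hθ B hB hδ)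

theorem famRowFinite_anti : Antitone (famRowFinite (S := S) (K := K) (n := n)) :=
  fun _ _ hδ _ hθ B hB hlt => hθ B hB fun i => (hlt i).trans_le hδ

theorem famRowFinite_zero : famRowFinite (S := S) (K := K) (n := n) 0 = ⊤ :=
  eq_top_iff.2 fun _ _ _ _ hlt => absurd (hlt 0) zero_le.not_gt

theorem coboundary_mem_famRowFinite {δ : Ordinal.{u}} {θ : Family S K (n + 1)}
    (hθ : θ ∈ famRowFinite δ) : coboundary θ ∈ famRowFinite δ := fun B hB hlt => by
  rw [coboundary_apply]
  exact AddSubgroup.sum_mem _ fun i _ => AddSubgroup.zsmul_mem _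
    (rowFinite_anti (hB.monotone (Fin.zero_le _)) (hθ _ (hB.removeNth i) fun _ => hlt _)) _

def IsCoherent (δ : Ordinal.{u}) (φ : Family S K (n + 1)) : Prop :=
  coboundary φ ∈ famRowFinite δ

def IsTrivial (δ : Ordinal.{u}) (φ : Family S K (n + 1)) : Prop :=
  ∃ ψ : Family S K n, coboundary ψ - φ ∈ famRowFinite δ

theorem IsTrivial.mono {δ δ' : Ordinal.{u}} {φ : Family S K (n + 1)} (h : IsTrivial δ φ)
    (hδ : δ' ≤ δ) : IsTrivial δ' φ :=
  h.imp fun _ hψ => famRowFinite_anti hδ hψ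

theorem isTrivial_zero (φ : Family S K (n + 1)) : IsTrivial 0 φ :=
  ⟨0, by rw [famRowFinite_zero]; exact AddSubgroup.mem_top _⟩

theorem IsCoherent.isTrivial_succ {δ γ : Ordinal.{u}} {φ : Family S K (n + 1)}
    (hφ : IsCoherent δ φ) (hγ : γ < δ) : IsTrivial (Order.succ γ) φ := by
  have hsign : (-1 : ℤ) ^ n * (-1) ^ n = 1 := by rw [← pow_add, Even.neg_one_pow ⟨n, rfl⟩]
  refine ⟨(-1 : ℤ) ^ n • cone γ φ, fun B hB hlt => ?_⟩
  rw [map_zsmul, Pi.sub_apply, Pi.smul_apply]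
  rcases (Order.lt_succ_iff.1 (hlt (Fin.last n))).lt_or_eq with hlast | hlast
  · have hsnoc : StrictMono (Fin.snoc (α := fun _ => Ordinal) B γ) := by
      simpa [Fin.insertNth_last'] using Fin.strictMono_insertNth_last hB γ hlast
    rw [coboundary_cone_of_forall_lt _ _ fun i => (hB.monotone (Fin.le_last i)).trans_lt hlast,
      smul_add, smul_smul, hsign, one_smul, add_sub_cancel_right]
    refine AddSubgroup.zsmul_mem _ ?_ _
    simpa using hφ _ hsnoc (Fin.lastCases (by simpa using hγ) fun i => by
      simpa using ((hB.monotone (Fin.le_last i)).trans_lt hlast).trans hγ)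
  · rw [← hlast, coboundary_cone_of_last_eq _ hB, smul_smul, hsign, one_smul, sub_self]
    exact zero_mem _

theorem IsCoherent.sub_mem_rowFinite {δ a b : Ordinal.{u}} {φ : Family S K 1}
    (hφ : IsCoherent δ φ) (ha : a < δ) (hb : b < δ) :
    φ (fun _ => b) - φ (fun _ => a) ∈ rowFinite (min a b) := by
  wlog hab : a ≤ b generalizing a b
  · simpa [min_comm] using neg_mem (this hb ha (le_of_not_ge hab))
  rcases hab.lt_or_eq with hab | rfl
  · have h := hφ ![a, b] (by simpa using hab) (by simp [Fin.forall_fin_two, ha, hb])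
    have h0 : Fin.removeNth 0 ![a, b] = fun _ => b := funext fun i => by fin_cases i; rfl
    have h1 : Fin.removeNth 1 ![a, b] = fun _ => a := funext fun i => by fin_cases i; rfl
    rw [coboundary_apply, Fin.sum_univ_two, h0, h1] at h
    simpa [sub_eq_add_neg, min_eq_left hab.le] using h
  · simp

theorem IsCoherent.isTrivial_of_nat_cofinal {δ : Ordinal.{u}} {φ : Family S K 1}
    (hφ : IsCoherent δ φ) {c : ℕ → Ordinal.{u}} (hc : ∀ j, c j < δ)
    (hcof : ∀ α < δ, ∃ j, α ≤ c j) : IsTrivial δ φ := by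
  refine ⟨fun _ s ξ => φ (fun _ => c (sInf {j | ξ < c j})) s ξ, fun B _ hlt => ?_⟩
  have hB : B = fun _ => B 0 := funext fun i => congrArg B (Fin.eq_zero i)
  obtain ⟨J, hJ⟩ := hcof _ (hlt 0)
  refine ((Finset.range (J + 1)).finite_toSet.biUnion fun j _ =>
    mem_rowFinite.1 (hφ.sub_mem_rowFinite (hc j) (hlt 0))).subset ?_
  rintro s ⟨ξ, hξ, hne⟩
  have hex : ξ < c J := hξ.trans_le hJ
  have hfirst : ξ < c (sInf {j | ξ < c j}) := Nat.sInf_mem (s := {j | ξ < c j}) ⟨J, hex⟩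
  refine Set.mem_biUnion (x := sInf {j | ξ < c j})
    (by simpa [Nat.lt_succ_iff] using Nat.sInf_le hex) ⟨ξ, lt_min hfirst hξ, ?_⟩
  rw [hB] at hne
  refine sub_ne_zero.2 (Ne.symm ?_)
  simpa [coboundary_apply, sub_eq_zero] using hne

theorem IsCoherent.isTrivial_of_cof_le_aleph0 {δ : Ordinal.{u}} {φ : Family S K 1}
    (hφ : IsCoherent δ φ) (hδ : δ.cof ≤ ℵ₀) : IsTrivial δ φ := by
  rcases eq_or_ne δ 0 with rfl | h0
  · exact isTrivial_zero φ
  obtain ⟨c, hc, hcof⟩ := exists_nat_cofinal hδ h0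
  exact hφ.isTrivial_of_nat_cofinal hc hcof

noncomputable def glue (D : Ordinal.{u} → Ordinal.{u}) (ψ : Ordinal.{u} → Family S K (n + 1)) :
    Family S K (n + 1) :=
  fun A => ψ (sInf {ν | ∀ i, A i < D ν}) A

theorem glue_sub_mem_famRowFinite {D : Ordinal.{u} → Ordinal.{u}}
    {ψ : Ordinal.{u} → Family S K (n + 1)} {ν : Ordinal.{u}}
    (hcompat : ∀ ν' < ν, ψ ν - ψ ν' ∈ famRowFinite (D ν')) :
    glue D ψ - ψ ν ∈ famRowFinite (D ν) := by
  intro A hA hlt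
  set s := {ν | ∀ i, A i < D ν}
  have hmem : ∀ i, A i < D (sInf s) := csInf_mem (s := s) ⟨ν, hlt⟩
  rcases (csInf_le' (s := s) hlt).lt_or_eq with hlt' | heq
  · simpa [glue] using neg_mem (hcompat _ hlt' A hA hmem)
  · show ψ (sInf s) A - ψ ν A ∈ _
    rw [heq, sub_self]
    exact zero_mem _

theorem coboundary_glue_sub_mem_famRowFinite {D : Ordinal.{u} → Ordinal.{u}}
    {ψ : Ordinal.{u} → Family S K (n + 1)} {φ : Family S K (n + 2)} {μ T : Ordinal.{u}}
    (hcov : ∀ α < T, ∃ ν < μ, α < D ν)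
    (hstage : ∀ ν < μ, coboundary (ψ ν) - φ ∈ famRowFinite (D ν) ∧
      ∀ ν' < ν, ψ ν - ψ ν' ∈ famRowFinite (D ν')) :
    coboundary (glue D ψ) - φ ∈ famRowFinite T := by
  intro B hB hlt
  obtain ⟨ν, hν, hBν⟩ := hcov _ (hlt (Fin.last _))
  have h := add_mem (coboundary_mem_famRowFinite (glue_sub_mem_famRowFinite (hstage ν hν).2))
    (hstage ν hν).1
  rw [map_sub, sub_add_sub_cancel] at h
  exact h B hB fun i => (hB.monotone (Fin.le_last i)).trans_lt hBν

theorem exists_stage_succ {D : Ordinal.{u} → Ordinal.{u}} (hD : Monotone D)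
    {ψ : Ordinal.{u} → Family S K (n + 1)} {φ : Family S K (n + 2)} {ρ : Ordinal.{u}}
    (htriv : IsTrivial (D (Order.succ ρ)) φ)
    (hIH : ∀ θ : Family S K (n + 1), IsCoherent (D ρ) θ → IsTrivial (D ρ) θ)
    (hψ : coboundary (ψ ρ) - φ ∈ famRowFinite (D ρ))
    (hcompat : ∀ ν' < ρ, ψ ρ - ψ ν' ∈ famRowFinite (D ν')) :
    ∃ x, coboundary x - φ ∈ famRowFinite (D (Order.succ ρ)) ∧
      ∀ ν' < Order.succ ρ, x - ψ ν' ∈ famRowFinite (D ν') := by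
  obtain ⟨ψ', hψ'⟩ := htriv
  obtain ⟨χ, hχ⟩ := hIH (ψ' - ψ ρ) <| by
    have h := sub_mem (famRowFinite_anti (hD (Order.le_succ ρ)) hψ') hψ
    rwa [sub_sub_sub_cancel_right, ← map_sub] at h
  have hρ : ψ' - coboundary χ - ψ ρ ∈ famRowFinite (D ρ) := by
    have h := neg_mem hχ
    rwa [neg_sub, sub_right_comm] at h
  refine ⟨ψ' - coboundary χ, ?_, fun ν' hν' => ?_⟩
  · rwa [map_sub, coboundary_coboundary, sub_zero]
  rcases (Order.lt_succ_iff.1 hν').lt_or_eq with hν' | rfl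
  · have h := add_mem (famRowFinite_anti (hD hν'.le) hρ) (hcompat ν' hν')
    rwa [sub_add_sub_cancel] at h
  · exact hρ

theorem isTrivial_of_ladder {c : Ordinal.{u}} {D : Ordinal.{u} → Ordinal.{u}}
    {φ : Family S K (n + 2)} (hD : Monotone D)
    (hsucc : ∀ ρ, Order.succ ρ ≤ c → IsTrivial (D (Order.succ ρ)) φ)
    (hIH : ∀ ρ < c, ∀ θ : Family S K (n + 1), IsCoherent (D ρ) θ → IsTrivial (D ρ) θ)
    (hlim : ∀ μ ≤ c, Order.IsSuccPrelimit μ → ∀ α < D μ, ∃ ν < μ, α < D ν) :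
    IsTrivial (D c) φ := by
  refine (exists_seq_of_extend
    (fun ν x ψ => ν ≤ c → coboundary x - φ ∈ famRowFinite (D ν) ∧
      ∀ ν' < ν, x - ψ ν' ∈ famRowFinite (D ν'))
    (fun ν x f g hfg h hν => ⟨(h hν).1, fun ν' h' => hfg ν' h' ▸ (h hν).2 ν' h'⟩)
    (fun ν ψ ih => ?_)).elim fun ψ hψ => ⟨ψ c, (hψ c le_rfl).1⟩
  by_cases hpre : Order.IsSuccPrelimit ν
  · refine ⟨glue D ψ, fun hν => ⟨coboundary_glue_sub_mem_famRowFinite (hlim ν hν hpre)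
      fun ν' h => ih ν' h (h.le.trans hν), fun ν' h => glue_sub_mem_famRowFinite
      (ih ν' h (h.le.trans hν)).2⟩⟩
  obtain ⟨ρ, rfl⟩ := Order.not_isSuccPrelimit_iff_mem_range_succ.1 hpre
  by_cases hρc : Order.succ ρ ≤ c
  · have hρ : ρ < c := (Order.lt_succ ρ).trans_le hρc
    obtain ⟨hψρ, hcompat⟩ := ih ρ (Order.lt_succ ρ) hρ.le
    obtain ⟨x, hx⟩ := exists_stage_succ hD (hsucc ρ hρc) (hIH ρ hρ) hψρ hcompat
    exact ⟨x, fun _ => hx⟩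
  · exact ⟨0, fun h => absurd h hρc⟩

theorem IsCoherent.isTrivial_of_isSuccLimit {δ : Ordinal.{u}} {φ : Family S K (n + 2)}
    (hφ : IsCoherent δ φ) (hδ : Order.IsSuccLimit δ)
    (hIH : ∀ γ : Ordinal.{u}, γ.cof < δ.cof →
      ∀ θ : Family S K (n + 1), IsCoherent γ θ → IsTrivial γ θ) :
    IsTrivial δ φ := by
  obtain ⟨D, hD, htop, hbelow, hlim⟩ := exists_ladder δ
  have hc : Order.IsSuccLimit δ.cof.ord :=
    isSuccLimit_ord (Ordinal.aleph0_le_cof_iff.2 (Ordinal.one_lt_cof_iff.2 hδ))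
  rw [← htop]
  refine isTrivial_of_ladder hD (fun ρ hρ => ?_) (fun ρ hρ θ hθ => hIH _ ?_ θ hθ)
    fun μ _ => hlim μ
  · have hlt := (hbelow _ (hc.succ_lt (Order.succ_le_iff.1 hρ))).1
    exact (hφ.isTrivial_succ hlt).mono (Order.le_succ _)
  · rw [(hbelow ρ hρ).2]
    exact (Ordinal.cof_le_card ρ).trans_lt (lt_ord.1 hρ)

theorem IsCoherent.isTrivial_of_cof_le_aleph {δ : Ordinal.{u}} {φ : Family S K (n + 1)}
    (hφ : IsCoherent δ φ) (hδ : δ.cof ≤ ℵ_ n) : IsTrivial δ φ := by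
  induction n generalizing δ with
  | zero => exact hφ.isTrivial_of_cof_le_aleph0 (by simpa using hδ)
  | succ n ih =>
    rcases Ordinal.zero_or_succ_or_isSuccLimit δ with rfl | ⟨γ, rfl⟩ | hlim
    · exact isTrivial_zero φ
    · exact hφ.isTrivial_succ (Order.lt_succ γ)
    · refine hφ.isTrivial_of_isSuccLimit hlim fun γ hγ θ hθ => ih hθ ?_
      rw [← Order.lt_succ_iff, succ_aleph]
      exact hγ.trans_le (by exact_mod_cast hδ)

end Families

end CoherentFamily

/-- **Goblot.** Let `n = m + 1 ≥ 1`, let `S` be a set, `K` an abelian group,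
and `β` an ordinal of cofinality at most `ℵ_{n-1} = ℵ_m`.  Then every `n`-coherent family
`⟨φ_{α⃗} : S × α₀ → K⟩` indexed by strictly increasing `n`-tuples of ordinals below `β`,
coherent modulo finitely many rows, is trivial. -/
theorem stmt_10 (m : ℕ) (S : Type*) (K : Type*) [AddCommGroup K]
    (β : Ordinal) (hβ : β.cof ≤ aleph m)
    (φ : (Fin (m + 1) → Ordinal) → S → Ordinal → K)
    (hcoh : ∀ B : Fin (m + 2) → Ordinal, StrictMono B → (∀ i, B i < β) →
      {s : S | ∃ ξ < B 0,
        ∑ i : Fin (m + 2), ((-1 : ℤ) ^ (i : ℕ)) • φ (Fin.removeNth i B) s ξ ≠ 0}.Finite) :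
    ∃ ψ : (Fin m → Ordinal) → S → Ordinal → K,
      ∀ B : Fin (m + 1) → Ordinal, StrictMono B → (∀ i, B i < β) →
        {s : S | ∃ ξ < B 0,
          (∑ i : Fin (m + 1), ((-1 : ℤ) ^ (i : ℕ)) • ψ (Fin.removeNth i B) s ξ)
            - φ B s ξ ≠ 0}.Finite := by
  have hφ : CoherentFamily.IsCoherent β φ := fun B hB hlt => by
    simpa [CoherentFamily.mem_rowFinite, CoherentFamily.coboundary_apply] using hcoh B hB hlt
  obtain ⟨ψ, hψ⟩ := hφ.isTrivial_of_cof_le_aleph hβ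
  exact ⟨ψ, fun B hB hlt => by
    simpa [CoherentFamily.mem_rowFinite, CoherentFamily.coboundary_apply] using hψ B hB hlt⟩
end

section
/- Let I and J be sets and H an abelian group. A function ψ : I × J → H satisfies that {x ∈ X(f) : ψ(x) ≠ 0} is finite for every f : I → [J]^{<ω} if and only if the set {i ∈ I : ψ(i,j) ≠ 0 for some j ∈ J} is finite. (Consequently, the inverse limit of the system A_{I,J}[H] is isomorphic to ⊕_I ∏_J H.) -/
/-- Let `I` and `J` be sets and `H` an abelian group.  A function
`ψ : I × J → H` satisfies that `{x ∈ X(f) : ψ x ≠ 0}` is finite for every `f : I → [J]^{<ω}`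
if and only if the set `{i ∈ I : ψ (i,j) ≠ 0 for some j ∈ J}` is finite.
(Here `X(f) = {(i,j) : j ∈ f i}`.) -/
theorem stmt_11 (I J : Type*) (H : Type*) [AddCommGroup H] (psi : I × J → H) :
    (∀ f : I → Finset J, {x : I × J | x.2 ∈ f x.1 ∧ psi x ≠ 0}.Finite) ↔
      {i : I | ∃ j : J, psi (i, j) ≠ 0}.Finite := by
  classical
  constructor
  · intro h
    -- choose for each bad i a witness j
    set S := {i : I | ∃ j : J, psi (i, j) ≠ 0} with hS
    by_cases hJ : Nonempty J
    · choose g hg using fun i (hi : i ∈ S) => hi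
      let f : I → Finset J := fun i =>
        if hi : i ∈ S then {g i hi} else ∅
      have hfin := h f
      have : S ⊆ Prod.fst '' {x : I × J | x.2 ∈ f x.1 ∧ psi x ≠ 0} := by
        intro i hi
        exact ⟨(i, g i hi), ⟨by simp [f, hi], hg i hi⟩, rfl⟩
      exact ((hfin.image Prod.fst).subset this)
    · have : S = ∅ := Set.eq_empty_of_forall_notMem fun i hi =>
        hi.elim fun j _ => hJ ⟨j⟩
      show S.Finite; rw [this]; exact Set.finite_empty
  · intro h f
    have hsub : {x : I × J | x.2 ∈ f x.1 ∧ psi x ≠ 0} ⊆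
        ⋃ i ∈ {i : I | ∃ j : J, psi (i, j) ≠ 0}, {i} ×ˢ (f i : Set J) := by
      rintro ⟨i, j⟩ ⟨hj, hne⟩
      exact Set.mem_biUnion ⟨j, hne⟩ (by simp [hj])
    exact (h.biUnion fun i _ => (Set.finite_singleton i).prod (f i).finite_toSet).subset hsub
end

section
/- Let K be a field, let S and T be extremally disconnected compact Hausdorff spaces, and let π : S × T → S be the projection. Then the pushforward π_*𝒦 of the constant sheaf of K-modules 𝒦 on S × T is isomorphic, as a sheaf of K-modules on S, to the constant sheaf on S associated with the K-module LocallyConstant(T, K) of locally constant functions from T to K. -/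
/-!
The constant sheaf with value `M` is the sheaf of locally constant `M`-valued functions: the
canonical map from the constant presheaf to it is locally injective and locally surjective, so it
becomes an isomorphism after sheafification. Sections of the pushforward along `X × T → X` over
`U` are then locally constant functions on `U × T`, and when `T` is compact the tube lemma shows
that these curry to locally constant maps `U → LocallyConstant T M`.
-/

open CategoryTheory TopologicalSpace Topology Filter

universe u

section Currying

variable {X T M : Type*} [TopologicalSpace X] [TopologicalSpace T]

theorem IsLocallyConstant.curry [CompactSpace T] {f : X × T → M} (hf : IsLocallyConstant f) :
    IsLocallyConstant fun x t => f (x, t) := by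
  refine (IsLocallyConstant.iff_eventually_eq _).2 fun x => ?_
  have hfiber : ∀ t ∈ Set.univ, ∀ᶠ z : X × T in 𝓝 (x, t), f (z.1, z.2) = f (x, z.2) :=
      fun t _ => by
    have hslice : ∀ᶠ z : X × T in 𝓝 (x, t), f (x, z.2) = f (x, t) :=
      ((continuous_const.prodMk continuous_snd).tendsto (x, t)).eventually
        (hf.eventually_eq (x, t))
    filter_upwards [hf.eventually_eq (x, t), hslice] with z h₁ h₂ using h₁.trans h₂.symm
  filter_upwards [isCompact_univ.eventually_forall_of_forall_eventually
    (P := fun y t => f (y, t) = f (x, t)) hfiber] with y hy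
  exact funext fun t => hy t trivial

theorem IsLocallyConstant.uncurry {g : X → LocallyConstant T M} (hg : IsLocallyConstant g) :
    IsLocallyConstant fun p : X × T => g p.1 p.2 := by
  refine (IsLocallyConstant.iff_eventually_eq _).2 fun p => ?_
  have h₁ : ∀ᶠ q : X × T in 𝓝 p, g q.1 = g p.1 :=
    (continuous_fst.tendsto p).eventually (hg.eventually_eq p.1)
  have h₂ : ∀ᶠ q : X × T in 𝓝 p, g p.1 q.2 = g p.1 p.2 :=
    (continuous_snd.tendsto p).eventually ((g p.1).isLocallyConstant.eventually_eq p.2)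
  filter_upwards [h₁, h₂] with q hq₁ hq₂
  rw [hq₁, hq₂]

def LocallyConstant.curryₗ (R : Type*) [Semiring R] [AddCommMonoid M] [Module R M]
    [CompactSpace T] : LocallyConstant (X × T) M ≃ₗ[R] LocallyConstant X (LocallyConstant T M) where
  toFun f := ⟨fun x => ⟨fun t => f (x, t), f.isLocallyConstant.comp_continuous
      (Continuous.prodMk_right x)⟩,
    f.isLocallyConstant.curry.desc _ _ DFunLike.coe_injective⟩
  invFun g := ⟨fun p => g p.1 p.2, g.isLocallyConstant.uncurry⟩
  left_inv _ := rfl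
  right_inv _ := rfl
  map_add' _ _ := rfl
  map_smul' _ _ := rfl

def Homeomorph.preimageFst (U : Set X) : (Prod.fst ⁻¹' U : Set (X × T)) ≃ₜ U × T where
  toFun p := (⟨p.1.1, p.2⟩, p.1.2)
  invFun q := ⟨(q.1, q.2), q.1.2⟩
  left_inv _ := rfl
  right_inv _ := rfl
  continuous_toFun := by fun_prop
  continuous_invFun := by fun_prop

end Currying

namespace TopCat

variable (R : Type u) [Ring R] (X : Type u) [TopologicalSpace X] (M : Type u) [AddCommGroup M]
  [Module R M]

def locallyConstantPresheaf : Presheaf (ModuleCat R) (of X) where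
  obj U := ModuleCat.of R (LocallyConstant U.unop M)
  map i := ModuleCat.ofHom (LocallyConstant.comapₗ R ⟨_, continuous_inclusion i.unop.le⟩)

def isLocallyConstantLocalPredicate : LocalPredicate fun _ : of X => M where
  pred f := IsLocallyConstant f
  res i _ hf := hf.comp_continuous (continuous_inclusion i.le)
  locality {U} f hloc := (IsLocallyConstant.iff_eventually_eq f).2 fun x => by
    obtain ⟨V, hxV, i, hf⟩ := hloc x
    change ∀ᶠ y in 𝓝 (Set.inclusion i.le ⟨x, hxV⟩), f y = f (Set.inclusion i.le ⟨x, hxV⟩)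
    rw [← (Opens.isOpenEmbedding_of_le i.le).map_nhds_eq]
    exact eventually_map.2 (hf.eventually_eq ⟨x, hxV⟩)

def locallyConstantPresheafForgetIso : locallyConstantPresheaf R X M ⋙ forget (ModuleCat R) ≅
    subpresheafToTypes (isLocallyConstantLocalPredicate X M).toPrelocalPredicate :=
  NatIso.ofComponents (fun U => Equiv.toIso
    { toFun f := ⟨f.1, f.2⟩
      invFun f := ⟨f.1, f.2⟩ })

theorem locallyConstantPresheaf_isSheaf : (locallyConstantPresheaf R X M).IsSheaf :=
  (Presheaf.isSheaf_iff_isSheaf_comp (forget (ModuleCat R)) _).2 <|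
    (Presheaf.isSheaf_of_iso_iff (locallyConstantPresheafForgetIso R X M)).2
      (subpresheafToTypes.isSheaf _)

def locallyConstantSheaf : Sheaf (ModuleCat R) (of X) :=
  ⟨locallyConstantPresheaf R X M, locallyConstantPresheaf_isSheaf R X M⟩

def constToLocallyConstant :
    (Functor.const (Opens (of X))ᵒᵖ).obj (ModuleCat.of R M) ⟶ locallyConstantPresheaf R X M where
  app _ := ModuleCat.ofHom (LocallyConstant.constₗ R)

instance : CategoryTheory.Presheaf.IsLocallyInjective (Opens.grothendieckTopology (of X))
    (constToLocallyConstant R X M) where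
  equalizerSieve_mem {U} m n h z hz := by
    obtain rfl : m = n := LocallyConstant.congr_fun h ⟨z, hz⟩
    rw [CategoryTheory.Presheaf.equalizerSieve_self_eq_top]
    exact (Opens.grothendieckTopology _).top_mem _ z hz

instance : CategoryTheory.Presheaf.IsLocallySurjective (Opens.grothendieckTopology (of X))
    (constToLocallyConstant R X M) :=
  (Presheaf.isLocallySurjective_iff _).2 fun U (s : LocallyConstant U M) z hz => by
    let fiber : Opens (of X) := ⟨Subtype.val '' {y | s y = s ⟨z, hz⟩},
      U.isOpenEmbedding'.isOpenMap _ (s.isLocallyConstant.isOpen_fiber _)⟩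
    refine ⟨fiber, Subtype.coe_image_subset _ _, ⟨s ⟨z, hz⟩, ?_⟩, ⟨z, hz⟩, rfl, rfl⟩
    refine LocallyConstant.ext ?_
    rintro ⟨_, y, hy, rfl⟩
    exact hy.symm

noncomputable def constantSheafIsoLocallyConstantSheaf :
    (constantSheaf (Opens.grothendieckTopology (of X)) (ModuleCat R)).obj (ModuleCat.of R M) ≅
      locallyConstantSheaf R X M :=
  have := ((Opens.grothendieckTopology (of X)).W_iff (A := ModuleCat R) _).1
    (GrothendieckTopology.W_of_isLocallyBijective _ (constToLocallyConstant R X M))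
  @asIso _ _ _ _ ((presheafToSheaf _ _).map (constToLocallyConstant R X M)) this ≪≫
    (sheafificationIso (locallyConstantSheaf R X M)).symm

variable {X} in
noncomputable def locallyConstantSheafPushforwardFstIso (T : Type u) [TopologicalSpace T]
    [CompactSpace T] :
    (Sheaf.pushforward (ModuleCat R) (ofHom (ContinuousMap.fst : C(X × T, X)))).obj
        (locallyConstantSheaf R (X × T) M) ≅
      locallyConstantSheaf R X (LocallyConstant T M) :=
  (sheafToPresheaf _ _).preimageIso <| NatIso.ofComponents
    (fun U => ((LocallyConstant.congrLeftₗ R (Homeomorph.preimageFst (U.unop : Set X))).trans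
      (LocallyConstant.curryₗ (T := T) R)).toModuleIso)
    (fun _ => by
      ext f
      rfl)

end TopCat

theorem stmt_13_general (K : Type) [Field K]
    (S T : Type) [TopologicalSpace S]
    [TopologicalSpace T] [CompactSpace T] :
    Nonempty
      (((TopCat.Sheaf.pushforward (ModuleCat K)
            (X := TopCat.of (S × T)) (Y := TopCat.of S) (TopCat.ofHom ContinuousMap.fst)).obj
          ((constantSheaf (Opens.grothendieckTopology (S × T)) (ModuleCat K)).obj
            (ModuleCat.of K K))) ≅
        ((constantSheaf (Opens.grothendieckTopology S) (ModuleCat K)).obj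
          (ModuleCat.of K (LocallyConstant T K)))) :=
  ⟨(TopCat.Sheaf.pushforward _ _).mapIso
      (TopCat.constantSheafIsoLocallyConstantSheaf K (S × T) K) ≪≫
    TopCat.locallyConstantSheafPushforwardFstIso K K T ≪≫
    (TopCat.constantSheafIsoLocallyConstantSheaf K S (LocallyConstant T K)).symm⟩

/-- For a field `K` and extremally disconnected compact Hausdorff spaces
`S` and `T`, the pushforward along the projection `π : S × T → S` of the constant sheaf of
`K`-modules with value `K` on `S × T` is isomorphic, as a sheaf of `K`-modules on `S`, to the
constant sheaf on `S` associated with the `K`-module `LocallyConstant T K` of locally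
constant functions from `T` to `K`. -/
theorem stmt_13 (K : Type) [Field K]
    (S T : Type) [TopologicalSpace S] [CompactSpace S] [T2Space S] [ExtremallyDisconnected S]
    [TopologicalSpace T] [CompactSpace T] [T2Space T] [ExtremallyDisconnected T] :
    Nonempty
      (((TopCat.Sheaf.pushforward (ModuleCat K)
            (X := TopCat.of (S × T)) (Y := TopCat.of S) (TopCat.ofHom ContinuousMap.fst)).obj
          ((constantSheaf (Opens.grothendieckTopology (S × T)) (ModuleCat K)).obj
            (ModuleCat.of K K))) ≅
        ((constantSheaf (Opens.grothendieckTopology S) (ModuleCat K)).obj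
          (ModuleCat.of K (LocallyConstant T K)))) :=
  stmt_13_general K S T
end
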